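/- arXiv:2205.09718 — 4 statements merged into one kernel-verified Lean document; each statement's English description precedes it below -/
import Mathlib

section
/- Let X be a proper metric space and A ⊆ X nonempty closed such that any two points x,y ∈ X/A with d(x,y) < d(x,A) or with y = A can be joined by a geodesic in X/A. Then the pseudometric space D_∞(X,A) with the bottleneck distance is geodesic. -/
/-!
The bottleneck distance `r = d(f, g)` need not be attained by a matching. In a limit of almost
optimal matchings along an ultrafilter, properness makes partners that escape to infinity in the
index set converge, to cluster points of the other diagram; so `r` is attained once such cluster
points may serve as partners. Adjoining cluster points (or points of `A`) to a diagram moves it by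
bottleneck distance zero, by a Hilbert-hotel shift along a sequence converging to the adjoined
point. Hence, up to distance zero, `f` and `g` are families `x i`, `y i` with
`d_{X/A}(x i, y i) ≤ r`. The hypothesis joins each such pair by two `r`-Lipschitz paths in `X/A`:
a geodesic from `x i` to `y i` if one of them is closer to the other than to `A`, and otherwise a
geodesic from `x i` to `A` together with one from `A` to `y i`. Running all these paths at once
gives diagrams `Γ t` with `d(Γ s, Γ t) ≤ |s - t| r`, and the triangle inequality upgrades this to
equality.
-/

open scoped ENNReal
open Filter Metric Set

/-- The bottleneck (pre)distance between two `ℕ`-indexed representatives of persistence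
diagrams on the metric pair `(X, A)`: the infimum, over countable multisets `α`, `β` of points
of `A` adjoined to `f` and `g` respectively and over bijections between the resulting
multisets, of the supremum displacement. -/
noncomputable def bdist {X : Type*} [MetricSpace X] (A : Set X) (f g : ℕ → X) : ℝ≥0∞ :=
  ⨅ (α : ℕ → X) (_ : ∀ n, α n ∈ A) (β : ℕ → X) (_ : ∀ n, β n ∈ A)
    (e : (ℕ ⊕ ℕ) ≃ (ℕ ⊕ ℕ)), ⨆ n : ℕ ⊕ ℕ, edist (Sum.elim f α n) (Sum.elim g β (e n))

/-- Two representatives define the same persistence diagram on `(X, A)` iff their restrictions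
away from `A` agree as multisets, i.e. there is a value-preserving bijection between the index
sets of points outside `A`. -/
def DiagEquiv {X : Type*} [MetricSpace X] (A : Set X) (f g : ℕ → X) : Prop :=
  ∃ e : {n : ℕ // f n ∉ A} ≃ {n : ℕ // g n ∉ A}, ∀ p, g (e p).1 = f p.1

/-- A representative belongs to `D_∞(X, A)` iff it is at finite bottleneck distance from the
empty diagram (represented by any multiset of points of `A`). -/
def IsDiagram {X : Type*} [MetricSpace X] (A : Set X) (f : ℕ → X) : Prop :=
  ∃ g : ℕ → X, (∀ n, g n ∈ A) ∧ bdist A f g ≠ ⊤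

/-- The quotient metric of `X/A`, read on representatives in `X`:
`d_{X/A}(x,y) = min (d(x,y)) (d(x,A) + d(y,A))`. -/
noncomputable def qdist {X : Type*} [MetricSpace X] (A : Set X) (x y : X) : ℝ :=
  min (dist x y) (Metric.infDist x A + Metric.infDist y A)

open Function Topology

namespace PEquiv

variable {α β : Type*}

open Classical in
theorem dite_exists_eq_some_iff {p : α → Prop} (hp : ∀ a a', p a → p a' → a = a')
    {a : α} : (if h : ∃ a, p a then some h.choose else none) = some a ↔ p a := by
  constructor
  · intro h
    split_ifs at h with ha
    exact Option.some_inj.1 h ▸ ha.choose_spec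
  · intro ha
    rw [dif_pos ⟨a, ha⟩]
    exact congrArg some (hp _ _ (Exists.choose_spec ⟨a, ha⟩) ha)

open Classical in
noncomputable def ofGraph (R : α → β → Prop) (hR : ∀ a b b', R a b → R a b' → b = b')
    (hR' : ∀ a a' b, R a b → R a' b → a = a') : α ≃. β where
  toFun a := if h : ∃ b, R a b then some h.choose else none
  invFun b := if h : ∃ a, R a b then some h.choose else none
  inv a b := by
    simp only [dite_exists_eq_some_iff (hR a), dite_exists_eq_some_iff (hR' · · b)]

variable {R : α → β → Prop} {hR : ∀ a b b', R a b → R a b' → b = b'}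
  {hR' : ∀ a a' b, R a b → R a' b → a = a'}

theorem mem_ofGraph {a : α} {b : β} : b ∈ ofGraph R hR hR' a ↔ R a b :=
  dite_exists_eq_some_iff (hR a)

theorem mem_ofGraph_symm {a : α} {b : β} : a ∈ (ofGraph R hR hR').symm b ↔ R a b :=
  dite_exists_eq_some_iff (hR' · · b)

theorem exists_sumEquiv_extension (e : ℕ ≃. ℕ) :
    ∃ E : ℕ ⊕ ℕ ≃ ℕ ⊕ ℕ, (∀ n m, E (.inl n) = .inl m → m ∈ e n) ∧
      (∀ n k, E (.inl n) = .inr k → e n = none) ∧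
      (∀ k m, E (.inr k) = .inl m → e.symm m = none) := by
  set S := {n | (e n).isSome}
  set T := {m | (e.symm m).isSome}
  let eST : S ≃ T :=
    { toFun n := ⟨(e n).get n.2, e.isSome_symm_get n.2⟩
      invFun m := ⟨(e.symm m).get m.2, e.symm.isSome_symm_get m.2⟩
      left_inv n := Subtype.ext <| Option.some_inj.1 <| by
        simpa using e.eq_some_iff.2 (Option.some_get n.2).symm
      right_inv m := Subtype.ext <| Option.some_inj.1 <| by
        simpa using e.symm.eq_some_iff.2 (Option.some_get m.2).symm }
  obtain ⟨φ⟩ : Nonempty (ℕ ≃ ↥Sᶜ ⊕ ℕ) := nonempty_equiv_of_countable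
  obtain ⟨ψ⟩ : Nonempty (ℕ ≃ ↥Tᶜ ⊕ ℕ) := nonempty_equiv_of_countable
  let E' : ↥Sᶜ ⊕ ℕ ≃ ↥Tᶜ ⊕ ℕ :=
    ((Equiv.refl _).sumCongr ψ).trans <| (Equiv.sumAssoc _ _ _).symm.trans <|
      ((Equiv.sumComm _ _).sumCongr (Equiv.refl ℕ)).trans <| (Equiv.sumAssoc _ _ _).trans <|
        (Equiv.refl _).sumCongr φ.symm
  refine ⟨((Equiv.Set.sumCompl S).symm.sumCongr (Equiv.refl ℕ)).trans <|
    (Equiv.sumAssoc _ _ _).trans <| (eST.sumCongr E').trans <| (Equiv.sumAssoc _ _ _).symm.trans <|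
      (Equiv.Set.sumCompl T).sumCongr (Equiv.refl ℕ), ?_, ?_, ?_⟩
  · intro n m h
    by_cases hn : n ∈ S
    · simp [Equiv.Set.sumCompl_symm_apply_of_mem hn, eST] at h
      exact h ▸ Option.get_mem _
    · simp [Equiv.Set.sumCompl_symm_apply_of_notMem hn, E'] at h
  · intro n k h
    by_cases hn : n ∈ S
    · simp [Equiv.Set.sumCompl_symm_apply_of_mem hn, eST] at h
    · simpa [S] using hn
  · intro k m h
    rcases hk : ψ k with t | j
    · simp [E', hk] at h
      exact h ▸ Option.not_isSome_iff_eq_none.1 t.2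
    · simp [E', hk] at h

end PEquiv

theorem Equiv.exists_symm_eq_inr {α β γ : Type*} (e : α ⊕ β ≃ γ) {k : γ}
    (hk : k ∉ range fun a => e (.inl a)) : ∃ b, e.symm k = .inr b := by
  rcases h : e.symm k with a | b
  · exact (hk ⟨a, by simp [← h]⟩).elim
  · exact ⟨b, rfl⟩

section Bottleneck

variable {X : Type*} [MetricSpace X] {A : Set X}

def IsMatching (A : Set X) (u v : ℕ → X) (e : ℕ ≃. ℕ) (b : ℝ≥0∞) : Prop :=
  (∀ n m, m ∈ e n → edist (u n) (v m) ≤ b) ∧ (∀ n, e n = none → infEDist (u n) A ≤ b) ∧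
    ∀ m, e.symm m = none → infEDist (v m) A ≤ b

theorem bdist_le_of_isMatching (hA : A.Nonempty) {u v : ℕ → X} {e : ℕ ≃. ℕ} {b : ℝ≥0∞}
    (h : IsMatching A u v e b) : bdist A u v ≤ b := by
  obtain ⟨hmatch, hu, hv⟩ := h
  obtain ⟨E, hEl, hElr, hEr⟩ := e.exists_sumEquiv_extension
  refine ENNReal.le_of_forall_pos_le_add fun ε hε _ => ?_
  have hnear (x : X) : ∃ a ∈ A, edist x a < infEDist x A + ε :=
    infEDist_lt_iff.1 (ENNReal.lt_add_right (infEDist_ne_top hA) (by positivity))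
  choose near hnearA hnear using hnear
  have hnear' {x : X} (hx : infEDist x A ≤ b) : edist x (near x) ≤ b + ε :=
    (hnear x).le.trans (add_le_add_left hx _)
  let α k := (E (.inr k)).elim (fun m => near (v m)) fun _ => hA.some
  let β k := (E.symm (.inr k)).elim (fun n => near (u n)) fun _ => hA.some
  have hα k : α k ∈ A := by
    simp only [α]; cases E (.inr k) <;> simp [hnearA, hA.some_mem]
  have hβ k : β k ∈ A := by
    simp only [β]; cases E.symm (.inr k) <;> simp [hnearA, hA.some_mem]
  refine iInf₂_le_of_le α hα <| iInf₂_le_of_le β hβ <| iInf_le_of_le E <| iSup_le fun i => ?_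
  rcases i with n | k <;> rcases hE : E _ with m | k'
  · exact (hmatch n m (hEl n m hE)).trans le_self_add
  · have : β k' = near (u n) := by simp [β, ← hE]
    simpa [this] using hnear' (hu n (hElr n k' hE))
  · have : α k = near (v m) := by simp [α, hE]
    simpa [this, edist_comm] using hnear' (hv m (hEr k m hE))
  · have h1 : α k = hA.some := by simp [α, hE]
    have h2 : β k' = hA.some := by simp [β, ← hE]
    simp [h1, h2]

theorem exists_isMatching_of_bdist_lt {u v : ℕ → X} {c : ℝ≥0∞} (h : bdist A u v < c) :
    ∃ e, IsMatching A u v e c := by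
  simp only [bdist, iInf_lt_iff] at h
  obtain ⟨α, hα, β, hβ, E, hE⟩ := h
  have hcost (i : ℕ ⊕ ℕ) : edist (Sum.elim u α i) (Sum.elim v β (E i)) < c :=
    (le_iSup (fun i => edist (Sum.elim u α i) (Sum.elim v β (E i))) i).trans_lt hE
  refine ⟨PEquiv.ofGraph (fun n m => E (.inl n) = .inl m) (fun n m m' h h' => by simpa [h] using h')
    (fun n n' m h h' => by simpa using E.injective (h.trans h'.symm)), ?_, ?_, ?_⟩
  · intro n m h
    simpa [PEquiv.mem_ofGraph.1 h] using (hcost (.inl n)).le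
  · intro n h
    obtain ⟨k, hk⟩ : ∃ k, E (.inl n) = .inr k := by
      rcases hn : E (.inl n) with m | k
      · exact ((Option.eq_none_iff_forall_not_mem.1 h) m (PEquiv.mem_ofGraph.2 hn)).elim
      · exact ⟨k, rfl⟩
    exact (infEDist_le_edist_of_mem (hβ k)).trans (by simpa [hk] using (hcost (.inl n)).le)
  · intro m h
    obtain ⟨k, hk⟩ : ∃ k, E (.inr k) = .inl m := by
      rcases hm : E.symm (.inl m) with n | k
      · exact ((Option.eq_none_iff_forall_not_mem.1 h) n
          (PEquiv.mem_ofGraph_symm.2 (E.symm_apply_eq.1 hm).symm)).elim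
      · exact ⟨k, E.symm_apply_eq.1 hm |>.symm⟩
    exact (infEDist_le_edist_of_mem (hα k)).trans
      (by simpa [hk, edist_comm] using (hcost (.inr k)).le)

theorem IsMatching.symm {u v : ℕ → X} {e : ℕ ≃. ℕ} {b : ℝ≥0∞} (h : IsMatching A u v e b) :
    IsMatching A v u e.symm b :=
  ⟨fun m n hn => by simpa [edist_comm] using h.1 n m (e.mem_iff_mem.1 hn), h.2.2, h.2.1⟩

theorem IsMatching.trans {u v w : ℕ → X} {e e' : ℕ ≃. ℕ} {b b' : ℝ≥0∞}
    (h : IsMatching A u v e b) (h' : IsMatching A v w e' b') :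
    IsMatching A u w (e.trans e') (b + b') := by
  refine ⟨fun n k hk => ?_, fun n hn => ?_, fun k hk => ?_⟩
  · obtain ⟨m, hm, hk⟩ := (PEquiv.mem_trans _ _ _ _).1 hk
    exact (edist_triangle _ (v m) _).trans (add_le_add (h.1 n m hm) (h'.1 m k hk))
  · rcases hm : e n with _ | m
    · exact (h.2.1 n hm).trans le_self_add
    · have : e' m = none := by simpa [PEquiv.trans, hm] using hn
      exact infEDist_le_edist_add_infEDist.trans (add_le_add (h.1 n m hm) (h'.2.1 m this))
  · rcases hm : e'.symm k with _ | m
    · exact (h'.2.2 k hm).trans le_add_self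
    · rw [PEquiv.symm_trans_rev] at hk
      have : e.symm m = none := by simpa [PEquiv.trans, hm] using hk
      refine infEDist_le_edist_add_infEDist.trans ((add_le_add ?_ (h.2.2 m this)).trans_eq
        (add_comm _ _))
      simpa [edist_comm] using h'.1 m k (e'.mem_iff_mem.1 hm)

theorem isMatching_refl (u : ℕ → X) : IsMatching A u u (PEquiv.refl ℕ) 0 :=
  ⟨by simp [PEquiv.refl_apply], by simp [PEquiv.refl_apply], by simp⟩

theorem isMatching_bot {u v : ℕ → X} (hu : ∀ n, u n ∈ A) (hv : ∀ m, v m ∈ A) :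
    IsMatching A u v ⊥ 0 :=
  ⟨by simp, fun n _ => (infEDist_zero_of_mem (hu n)).le,
    fun m _ => (infEDist_zero_of_mem (hv m)).le⟩

theorem bdist_comm (hA : A.Nonempty) (u v : ℕ → X) : bdist A u v = bdist A v u := by
  suffices ∀ u v : ℕ → X, bdist A v u ≤ bdist A u v from le_antisymm (this v u) (this u v)
  intro u v
  refine le_of_forall_gt_imp_ge_of_dense fun c hc => ?_
  obtain ⟨e, he⟩ := exists_isMatching_of_bdist_lt hc
  exact bdist_le_of_isMatching hA he.symm

theorem bdist_triangle (hA : A.Nonempty) (u v w : ℕ → X) :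
    bdist A u w ≤ bdist A u v + bdist A v w := by
  refine ENNReal.le_of_forall_pos_le_add fun ε hε hlt => ?_
  have hε' : (ε / 2 : ℝ≥0∞) ≠ 0 := by simpa using hε.ne'
  obtain ⟨e, he⟩ := exists_isMatching_of_bdist_lt
    (ENNReal.lt_add_right (ENNReal.add_lt_top.1 hlt).1.ne hε')
  obtain ⟨e', he'⟩ := exists_isMatching_of_bdist_lt
    (ENNReal.lt_add_right (ENNReal.add_lt_top.1 hlt).2.ne hε')
  calc bdist A u w ≤ (bdist A u v + ε / 2) + (bdist A v w + ε / 2) :=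
        bdist_le_of_isMatching hA (he.trans he')
    _ = bdist A u v + bdist A v w + ε := by rw [add_add_add_comm, ENNReal.add_halves]

theorem bdist_self (hA : A.Nonempty) (u : ℕ → X) : bdist A u u = 0 :=
  nonpos_iff_eq_zero.1 (bdist_le_of_isMatching hA (isMatching_refl u))

theorem bdist_congr (hA : A.Nonempty) {u u' v v' : ℕ → X} (hu : bdist A u u' = 0)
    (hv : bdist A v v' = 0) : bdist A u v = bdist A u' v' := by
  have hu' : bdist A u' u = 0 := by rwa [bdist_comm hA]
  have hv' : bdist A v' v = 0 := by rwa [bdist_comm hA]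
  apply le_antisymm
  · calc bdist A u v ≤ bdist A u u' + bdist A u' v := bdist_triangle hA _ _ _
      _ ≤ bdist A u u' + (bdist A u' v' + bdist A v' v) := by gcongr; exact bdist_triangle hA _ _ _
      _ = bdist A u' v' := by rw [hu, hv', zero_add, add_zero]
  · calc bdist A u' v' ≤ bdist A u' u + bdist A u v' := bdist_triangle hA _ _ _
      _ ≤ bdist A u' u + (bdist A u v + bdist A v v') := by gcongr; exact bdist_triangle hA _ _ _
      _ = bdist A u v := by rw [hu', hv, zero_add, add_zero]

theorem bdist_ne_top (hA : A.Nonempty) {f g : ℕ → X} (hf : IsDiagram A f) (hg : IsDiagram A g) :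
    bdist A f g ≠ ⊤ := by
  obtain ⟨f₀, hf₀, hff₀⟩ := hf
  obtain ⟨g₀, hg₀, hgg₀⟩ := hg
  have h₀ : bdist A f₀ g₀ = 0 :=
    nonpos_iff_eq_zero.1 (bdist_le_of_isMatching hA (isMatching_bot hf₀ hg₀))
  refine ne_top_of_le_ne_top (ENNReal.add_ne_top.2 ⟨hff₀, hgg₀⟩) ?_
  calc bdist A f g ≤ bdist A f f₀ + bdist A f₀ g := bdist_triangle hA _ _ _
    _ ≤ bdist A f f₀ + (bdist A f₀ g₀ + bdist A g₀ g) := by gcongr; exact bdist_triangle hA _ _ _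
    _ = bdist A f f₀ + bdist A g g₀ := by rw [h₀, zero_add, bdist_comm hA g₀]

theorem IsDiagram.of_bdist_ne_top (hA : A.Nonempty) {f g : ℕ → X} (hf : IsDiagram A f)
    (hgf : bdist A g f ≠ ⊤) : IsDiagram A g := by
  obtain ⟨f₀, hf₀, hff₀⟩ := hf
  exact ⟨f₀, hf₀, ne_top_of_le_ne_top (ENNReal.add_ne_top.2 ⟨hgf, hff₀⟩) (bdist_triangle hA _ _ _)⟩

theorem bdist_eq_of_forall_le (hA : A.Nonempty) {Γ : ℝ → ℕ → X}
    (hfin : bdist A (Γ 0) (Γ 1) ≠ ⊤)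
    (hle : ∀ s ∈ Icc (0:ℝ) 1, ∀ t ∈ Icc (0:ℝ) 1,
      bdist A (Γ s) (Γ t) ≤ ENNReal.ofReal |s - t| * bdist A (Γ 0) (Γ 1))
    {s t : ℝ} (hs : s ∈ Icc (0:ℝ) 1) (ht : t ∈ Icc (0:ℝ) 1) :
    bdist A (Γ s) (Γ t) = ENNReal.ofReal |s - t| * bdist A (Γ 0) (Γ 1) := by
  wlog hst : s ≤ t generalizing s t
  · rw [bdist_comm hA, abs_sub_comm]
    exact this ht hs (le_of_not_ge hst)
  refine le_antisymm (hle s hs t ht) ?_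
  set r := bdist A (Γ 0) (Γ 1)
  have h0 : (0:ℝ) ∈ Icc (0:ℝ) 1 := ⟨le_rfl, zero_le_one⟩
  have h1 : (1:ℝ) ∈ Icc (0:ℝ) 1 := ⟨zero_le_one, le_rfl⟩
  have hsr : bdist A (Γ 0) (Γ s) ≤ ENNReal.ofReal s * r := by
    simpa [abs_of_nonneg hs.1] using hle 0 h0 s hs
  have htr : bdist A (Γ t) (Γ 1) ≤ ENNReal.ofReal (1 - t) * r := by
    simpa [abs_of_nonpos (sub_nonpos.2 ht.2)] using hle t ht 1 h1
  rw [abs_of_nonpos (sub_nonpos.2 hst), neg_sub]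
  refine ENNReal.le_of_add_le_add_left (a := ENNReal.ofReal s * r + ENNReal.ofReal (1 - t) * r)
    (by finiteness) ?_
  calc ENNReal.ofReal s * r + ENNReal.ofReal (1 - t) * r + ENNReal.ofReal (t - s) * r
      = r := by
        rw [← add_mul, ← add_mul, ← ENNReal.ofReal_add hs.1 (by linarith [ht.2]),
          ← ENNReal.ofReal_add (by linarith [ht.2, hs.1]) (by linarith),
          show s + (1 - t) + (t - s) = 1 by ring, ENNReal.ofReal_one, one_mul]
    _ ≤ bdist A (Γ 0) (Γ t) + bdist A (Γ t) (Γ 1) := bdist_triangle hA _ _ _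
    _ ≤ bdist A (Γ 0) (Γ s) + bdist A (Γ s) (Γ t) + bdist A (Γ t) (Γ 1) := by
        gcongr
        exact bdist_triangle hA _ _ _
    _ ≤ ENNReal.ofReal s * r + bdist A (Γ s) (Γ t) + ENNReal.ofReal (1 - t) * r := by gcongr
    _ = _ := add_right_comm _ _ _

end Bottleneck

section Quotient

variable {X : Type*} [MetricSpace X] {A : Set X}

noncomputable def quotEDist (A : Set X) (x y : X) : ℝ≥0∞ :=
  min (edist x y) (infEDist x A + infEDist y A)

theorem quotEDist_comm (x y : X) : quotEDist A x y = quotEDist A y x := by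
  rw [quotEDist, quotEDist, edist_comm, add_comm]

theorem quotEDist_le_edist (x y : X) : quotEDist A x y ≤ edist x y := min_le_left _ _

theorem quotEDist_self (x : X) : quotEDist A x x = 0 := by simp [quotEDist]

theorem quotEDist_eq_infEDist_of_mem {a : X} (ha : a ∈ A) (x : X) :
    quotEDist A a x = infEDist x A := by
  rw [quotEDist, infEDist_zero_of_mem ha, zero_add, edist_comm]
  exact min_eq_right (infEDist_le_edist_of_mem ha)

theorem quotEDist_congr_left {a a' : X} (h : a = a' ∨ a ∈ A ∧ a' ∈ A) (x : X) :
    quotEDist A a x = quotEDist A a' x := by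
  rcases h with rfl | ⟨ha, ha'⟩
  · rfl
  · rw [quotEDist_eq_infEDist_of_mem ha, quotEDist_eq_infEDist_of_mem ha']

theorem ofReal_infDist (hA : A.Nonempty) (x : X) :
    ENNReal.ofReal (infDist x A) = infEDist x A :=
  ENNReal.ofReal_toReal (infEDist_ne_top hA)

theorem ofReal_qdist (hA : A.Nonempty) (x y : X) :
    ENNReal.ofReal (qdist A x y) = quotEDist A x y := by
  rw [qdist, ENNReal.ofReal_min, ENNReal.ofReal_add infDist_nonneg infDist_nonneg,
    ofReal_infDist hA, ofReal_infDist hA, ← edist_dist, quotEDist]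

theorem bdist_le_of_injective (hA : A.Nonempty) {u v : ℕ → X} {b : ℝ≥0∞} (ψ : ℕ → ℕ)
    (hψ : Injective ψ) (hcost : ∀ n, quotEDist A (u n) (v (ψ n)) ≤ b)
    (hrest : ∀ m ∉ range ψ, infEDist (v m) A ≤ b) : bdist A u v ≤ b := by
  refine bdist_le_of_isMatching hA
    (e := PEquiv.ofGraph (fun n m => ψ n = m ∧ edist (u n) (v m) ≤ b) ?_ ?_) ⟨?_, ?_, ?_⟩
  · rintro n m m' ⟨rfl, -⟩ ⟨rfl, -⟩
    rfl
  · rintro n n' m ⟨rfl, -⟩ ⟨h, -⟩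
    exact hψ h.symm
  · exact fun n m h => (PEquiv.mem_ofGraph.1 h).2
  · intro n h
    have : ¬ edist (u n) (v (ψ n)) ≤ b := fun h' =>
      Option.eq_none_iff_forall_not_mem.1 h (ψ n) (PEquiv.mem_ofGraph.2 ⟨rfl, h'⟩)
    exact le_self_add.trans ((min_le_iff.1 (hcost n)).resolve_left this)
  · intro m h
    by_cases hm : m ∈ range ψ
    · obtain ⟨n, rfl⟩ := hm
      have : ¬ edist (u n) (v (ψ n)) ≤ b := fun h' =>
        Option.eq_none_iff_forall_not_mem.1 h n (PEquiv.mem_ofGraph_symm.2 ⟨rfl, h'⟩)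
      exact le_add_self.trans ((min_le_iff.1 (hcost n)).resolve_left this)
    · exact hrest m hm

end Quotient

section Adjoinable

variable {X : Type*} [MetricSpace X] {A : Set X}

def IsAdjoinable (A : Set X) (v : ℕ → X) (y : X) : Prop :=
  y ∈ A ∨ MapClusterPt y atTop v

theorem exists_trains {ι : Type*} [Countable ι] {L : ℕ → X} {ζ : ι → X}
    (hζ : ∀ i, MapClusterPt (ζ i) atTop L) {ε : ℝ} (hε : 0 < ε) :
    ∃ T : ι × ℕ → ℕ, Injective T ∧ ∀ p, dist (L (T p)) (ζ p.1) < ε := by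
  obtain ⟨c, hc⟩ := Countable.exists_injective_nat (ι × ℕ)
  obtain ⟨φ, hφ, hφP⟩ := extraction_forall_of_frequently
    (P := fun n k => ∀ p, c p = n → dist (L k) (ζ p.1) < ε) fun n => by
      by_cases hn : ∃ p, c p = n
      · obtain ⟨p, rfl⟩ := hn
        refine (mapClusterPt_iff_frequently.1 (hζ p.1) _ (ball_mem_nhds _ hε)).mono
          fun k hk p' hp' => ?_
        rw [hc hp']
        exact hk
      · exact Frequently.of_forall fun k p hp => (hn ⟨p, hp⟩).elim
  exact ⟨φ ∘ c, hφ.injective.comp hc, fun p => hφP (c p) p rfl⟩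

/-- Hilbert-hotel shift along the trains `T (d, ·)`, which converge to the adjoined points `d`. -/
def trainShift {D : Set ℕ} (j : ℕ → ℕ) (T : D × ℕ → ℕ) : D × ℕ → ℕ
  | (d, 0) => d
  | (d, k + 1) => j (T (d, k))

section trainShift

variable {D : Set ℕ} {j : ℕ → ℕ} {T : D × ℕ → ℕ}

theorem trainShift_ne (hj : Injective j) (hD : ∀ d : D, (d : ℕ) ∉ range j) {n : ℕ}
    (hn : n ∉ range T) (p : D × ℕ) : trainShift j T p ≠ j n := by
  rcases p with ⟨d, _ | k⟩
  · exact fun h => hD d ⟨n, h.symm⟩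
  · exact fun h => hn ⟨(d, k), hj h⟩

theorem trainShift_injective (hj : Injective j) (hT : Injective T)
    (hD : ∀ d : D, (d : ℕ) ∉ range j) : Injective (trainShift j T) := by
  rintro ⟨d, _ | k⟩ ⟨d', _ | k'⟩ h <;> simp only [trainShift] at h
  · rw [Subtype.ext h]
  · exact (hD d ⟨_, h.symm⟩).elim
  · exact (hD d' ⟨_, h⟩).elim
  · simpa using hT (hj h)

theorem injective_extend_trainShift (hj : Injective j) (hT : Injective T)
    (hD : ∀ d : D, (d : ℕ) ∉ range j) : Injective (extend T (trainShift j T) j) := by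
  have hψT (p) : extend T (trainShift j T) j (T p) = trainShift j T p := hT.extend_apply _ _ _
  have hψj (n) (hn : n ∉ range T) : extend T (trainShift j T) j n = j n :=
    extend_apply' _ _ _ hn
  intro n n' h
  rcases em (n ∈ range T) with ⟨p, rfl⟩ | hn <;> rcases em (n' ∈ range T) with ⟨p', rfl⟩ | hn'
  · rw [hψT, hψT] at h
    rw [trainShift_injective hj hT hD h]
  · rw [hψT, hψj _ hn'] at h
    exact (trainShift_ne hj hD hn' p h).elim
  · rw [hψT, hψj _ hn] at h
    exact (trainShift_ne hj hD hn p' h.symm).elim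
  · rw [hψj _ hn, hψj _ hn'] at h
    exact hj h

end trainShift

theorem bdist_eq_zero_of_adjoinable (hA : A.Nonempty) {L M : ℕ → X} (j : ℕ → ℕ)
    (hj : Injective j) (hLM : ∀ n, M (j n) = L n)
    (hadj : ∀ m ∉ range j, IsAdjoinable A L (M m)) : bdist A L M = 0 := by
  refine nonpos_iff_eq_zero.1 (ENNReal.le_of_forall_pos_le_add fun ε hε _ => ?_)
  rw [zero_add]
  have hclose {x y : X} (h : dist x y < ε) : quotEDist A x y ≤ ε :=
    (quotEDist_le_edist x y).trans <| by
      rw [edist_dist, ← ENNReal.ofReal_coe_nnreal]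
      exact ENNReal.ofReal_le_ofReal h.le
  -- `D` indexes the adjoined cluster points; adjoined points of `A` are left unmatched.
  let D : Set ℕ := {m | m ∉ range j ∧ M m ∉ A}
  have hD (d : D) : (d : ℕ) ∉ range j := d.2.1
  obtain ⟨T, hT, hTdist⟩ := exists_trains (ζ := fun d : D => M d)
    (fun d => (hadj d d.2.1).resolve_left d.2.2) (half_pos (NNReal.coe_pos.2 hε))
  have hψT (p) : extend T (trainShift j T) j (T p) = trainShift j T p := hT.extend_apply _ _ _
  have hψj (n) (hn : n ∉ range T) : extend T (trainShift j T) j n = j n :=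
    extend_apply' _ _ _ hn
  refine bdist_le_of_injective hA _ (injective_extend_trainShift hj hT hD) (fun n => ?_)
    fun m hm => ?_
  · rcases em (n ∈ range T) with ⟨⟨d, _ | k⟩, rfl⟩ | hn
    · rw [hψT]
      exact hclose ((hTdist _).trans (half_lt_self (NNReal.coe_pos.2 hε)))
    · rw [hψT, trainShift, hLM]
      refine hclose ((dist_triangle_right _ _ (M d)).trans_lt ?_)
      linarith [hTdist (d, k + 1), hTdist (d, k)]
    · rw [hψj n hn, hLM, quotEDist_self]
      exact zero_le
  · suffices M m ∈ A by rw [infEDist_zero_of_mem this]; exact zero_le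
    by_contra hmA
    by_cases hmj : m ∈ range j
    · obtain ⟨n, rfl⟩ := hmj
      by_cases hn : n ∈ range T
      · obtain ⟨⟨d, k⟩, rfl⟩ := hn
        exact hm ⟨T (d, k + 1), hψT _⟩
      · exact hm ⟨n, hψj n hn⟩
    · exact hm ⟨T (⟨m, hmj, hmA⟩, 0), hψT _⟩

end Adjoinable

section Limit

variable {X : Type*} [MetricSpace X] [ProperSpace X] {A : Set X}

theorem exists_adjoinable_partner (hA : A.Nonempty) {U : Ultrafilter ℕ} {c : ℕ → ℝ≥0∞}
    {r : ℝ≥0∞} (hr : r ≠ ⊤) (hc : Tendsto c U (𝓝 r)) {x : X} {v : ℕ → X} {p : ℕ → Option ℕ}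
    (hsome : ∀ k m, p k = some m → edist x (v m) ≤ c k)
    (hnone : ∀ k, p k = none → infEDist x A ≤ c k) (hp : ∀ m, ¬ ∀ᶠ k in U, p k = some m) :
    ∃ y, quotEDist A x y ≤ r ∧ IsAdjoinable A v y := by
  by_cases hn : ∀ᶠ k in U, p k = none
  · refine ⟨hA.some, ?_, .inl hA.some_mem⟩
    rw [quotEDist_comm, quotEDist_eq_infEDist_of_mem hA.some_mem]
    exact ge_of_tendsto hc (hn.mono hnone)
  have hs : ∀ᶠ k in U, p k ≠ none := Ultrafilter.eventually_not.2 hn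
  let π k := (p k).elim x v
  have hπ : ∀ᶠ k in U, edist x (π k) ≤ c k := hs.mono fun k hk => by
    obtain ⟨m, hm⟩ := Option.ne_none_iff_exists'.1 hk
    simpa [π, hm] using hsome k m hm
  have hball : ∀ᶠ k in U, π k ∈ closedBall x (r + 1).toReal := by
    filter_upwards [hπ, hc.eventually (gt_mem_nhds (ENNReal.lt_add_right hr one_ne_zero))]
      with k hk hk'
    rw [mem_closedBall, dist_comm, ← edist_le_ofReal ENNReal.toReal_nonneg,
      ENNReal.ofReal_toReal (by simpa using hr)]
    exact hk.trans hk'.le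
  obtain ⟨z, -, hz⟩ :=
    (isCompact_closedBall x _).ultrafilter_le_nhds (U.map π) (le_principal_iff.2 hball)
  refine ⟨z, (quotEDist_le_edist x z).trans
    (le_of_tendsto_of_tendsto (tendsto_const_nhds.edist hz) hc hπ), .inr ?_⟩
  -- If only finitely many `v m` were near `z`, one of them would be the partner `U`-eventually.
  refine mapClusterPt_iff_frequently.2 fun s hs' =>
    Nat.frequently_atTop_iff_infinite.2 fun hfin => ?_
  have : ⋃ m ∈ {m | v m ∈ s}, {k | p k = some m} ∈ U := by
    filter_upwards [hs, hz hs'] with k hk hks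
    obtain ⟨m, hm⟩ := Option.ne_none_iff_exists'.1 hk
    exact mem_biUnion (show v m ∈ s by simpa [π, hm] using hks) hm
  obtain ⟨m, -, hm⟩ := (Ultrafilter.finite_biUnion_mem_iff hfin).1 this
  exact hp m hm

theorem exists_limit_matching (hA : A.Nonempty) {u v : ℕ → X} {r : ℝ≥0∞} (hr : r ≠ ⊤)
    (h : bdist A u v ≤ r) :
    ∃ σ : ℕ ≃. ℕ, (∀ n m, m ∈ σ n → edist (u n) (v m) ≤ r) ∧
      (∀ n, σ n = none → ∃ y, quotEDist A (u n) y ≤ r ∧ IsAdjoinable A v y) ∧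
      (∀ m, σ.symm m = none → ∃ x, quotEDist A x (v m) ≤ r ∧ IsAdjoinable A u x) := by
  let c (k : ℕ) : ℝ≥0∞ := r + (k : ℝ≥0∞)⁻¹
  choose e he using fun k : ℕ => exists_isMatching_of_bdist_lt (c := c k)
    (h.trans_lt (ENNReal.lt_add_right hr (ENNReal.inv_ne_zero.2 (ENNReal.natCast_ne_top k))))
  let U := hyperfilter ℕ
  have hU : ↑U ≤ (atTop : Filter ℕ) := Nat.cofinite_eq_atTop ▸ hyperfilter_le_cofinite
  have hc : Tendsto c U (𝓝 r) := by
    simpa using tendsto_const_nhds.add (ENNReal.tendsto_inv_nat_nhds_zero.mono_left hU)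
  let σ := PEquiv.ofGraph (fun n m => ∀ᶠ k in U, m ∈ e k n)
    (fun n m m' h h' => by
      obtain ⟨k, hk, hk'⟩ := (h.and h').exists
      exact Option.some_inj.1 (hk.symm.trans hk'))
    (fun n n' m h h' => by
      obtain ⟨k, hk, hk'⟩ := (h.and h').exists
      exact (e k).inj hk hk')
  refine ⟨σ, fun n m hm => ge_of_tendsto hc ((PEquiv.mem_ofGraph.1 hm).mono
    fun k hk => (he k).1 n m hk), fun n hn => ?_, fun m hm => ?_⟩
  · exact exists_adjoinable_partner hA hr hc (fun k m hm => (he k).1 n m hm)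
      (fun k hk => (he k).2.1 n hk)
      fun m hm' => Option.eq_none_iff_forall_not_mem.1 hn m (PEquiv.mem_ofGraph.2 hm')
  · obtain ⟨x, hx, hxu⟩ := exists_adjoinable_partner hA hr hc
      (fun k n hn => (he k).symm.1 m n hn) (fun k hk => (he k).2.2 m hk)
      fun n hn' => Option.eq_none_iff_forall_not_mem.1 hm n
        (PEquiv.mem_ofGraph_symm.2 (hn'.mono fun k hk => (e k).mem_iff_mem.1 hk))
    exact ⟨x, quotEDist_comm (A := A) (v m) x ▸ hx, hxu⟩

end Limit

section Pairing

variable {X : Type*} [MetricSpace X] {A : Set X}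

theorem exists_pairing (hA : A.Nonempty) {u v : ℕ → X} {r : ℝ≥0∞} (σ : ℕ ≃. ℕ)
    (hσ : ∀ n m, m ∈ σ n → edist (u n) (v m) ≤ r)
    (hu : ∀ n, σ n = none → ∃ y, quotEDist A (u n) y ≤ r ∧ IsAdjoinable A v y)
    (hv : ∀ m, σ.symm m = none → ∃ x, quotEDist A x (v m) ≤ r ∧ IsAdjoinable A u x) :
    ∃ x y : ℕ → X, bdist A u x = 0 ∧ bdist A v y = 0 ∧ ∀ i, quotEDist A (x i) (y i) ≤ r := by
  classical
  have : Nonempty X := ⟨hA.some⟩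
  choose! y₀ hy₀ using hu
  choose! x₀ hx₀ using hv
  let enc := Equiv.natSumNatEquivNat
  let x' : ℕ ⊕ ℕ → X := Sum.elim u fun m => if σ.symm m = none then x₀ m else hA.some
  let y' : ℕ ⊕ ℕ → X :=
    Sum.elim (fun n => (σ n).elim (y₀ n) v) fun m => if σ.symm m = none then v m else hA.some
  refine ⟨x' ∘ enc.symm, y' ∘ enc.symm, ?_, ?_, fun i => ?_⟩
  · refine bdist_eq_zero_of_adjoinable hA (fun n => enc (.inl n))
      (enc.injective.comp Sum.inl_injective) (fun n => by simp [x']) fun k hk => ?_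
    obtain ⟨m, hm⟩ := enc.exists_symm_eq_inr hk
    simp only [comp_apply, hm, x', Sum.elim_inr]
    split_ifs with h
    · exact (hx₀ m h).2
    · exact .inl hA.some_mem
  · refine bdist_eq_zero_of_adjoinable hA (fun m => enc ((σ.symm m).elim (.inr m) .inl))
      (fun m m' h => ?_) (fun m => ?_) fun k hk => ?_
    · rcases hm : σ.symm m with _ | n <;> rcases hm' : σ.symm m' with _ | n' <;>
        simp [hm, hm'] at h
      · exact h
      · subst h
        exact σ.symm.inj hm hm'
    · rcases hm : σ.symm m with _ | n
      · simp [y', hm]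
      · simp [y', σ.eq_some_iff.1 hm]
    · rcases h : enc.symm k with n | m
      · rcases hn : σ n with _ | m
        · simpa [y', h, hn] using (hy₀ n hn).2
        · exact (hk ⟨m, by simp [σ.eq_some_iff.2 hn, ← h]⟩).elim
      · by_cases hm : σ.symm m = none
        · exact (hk ⟨m, by simp [hm, ← h]⟩).elim
        · simpa [y', h, hm] using .inl hA.some_mem
  · rcases h : enc.symm i with n | m
    · rcases hn : σ n with _ | m
      · simpa [x', y', h, hn] using (hy₀ n hn).1
      · simpa [x', y', h, hn] using (quotEDist_le_edist _ _).trans (hσ n m hn)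
    · by_cases hm : σ.symm m = none
      · simpa [x', y', h, hm] using (hx₀ m hm).1
      · simp [x', y', h, hm, quotEDist_self]

end Pairing

section Paths

variable {X : Type*} [MetricSpace X] {A : Set X}

def IsQuotGeodesic (A : Set X) (x y : X) (γ : ℝ → X) : Prop :=
  (γ 0 = x ∨ (γ 0 ∈ A ∧ x ∈ A)) ∧ (γ 1 = y ∨ (γ 1 ∈ A ∧ y ∈ A)) ∧
    ∀ s t : ℝ, s ∈ Set.Icc (0:ℝ) 1 → t ∈ Set.Icc (0:ℝ) 1 →
      qdist A (γ s) (γ t) = |s - t| * qdist A x y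

def QuotLipschitz (A : Set X) (c : ℝ≥0∞) (γ : ℝ → X) : Prop :=
  ∀ s ∈ Icc (0:ℝ) 1, ∀ t ∈ Icc (0:ℝ) 1, quotEDist A (γ s) (γ t) ≤ ENNReal.ofReal |s - t| * c

theorem QuotLipschitz.mono {c c' : ℝ≥0∞} {γ : ℝ → X} (h : QuotLipschitz A c γ) (hc : c ≤ c') :
    QuotLipschitz A c' γ :=
  fun s hs t ht => (h s hs t ht).trans (by gcongr)

theorem QuotLipschitz.comp_one_sub {c : ℝ≥0∞} {γ : ℝ → X} (h : QuotLipschitz A c γ) :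
    QuotLipschitz A c fun t => γ (1 - t) := by
  intro s hs t ht
  have := h (1 - s) ⟨by linarith [hs.2], by linarith [hs.1]⟩ (1 - t)
    ⟨by linarith [ht.2], by linarith [ht.1]⟩
  rwa [show 1 - s - (1 - t) = t - s by ring, abs_sub_comm] at this

theorem quotLipschitz_const (c : ℝ≥0∞) (a : X) : QuotLipschitz A c fun _ => a :=
  fun s _ t _ => by simp [quotEDist_self]

theorem IsQuotGeodesic.exists_quotLipschitz (hA : A.Nonempty) {x y : X} {γ : ℝ → X}
    (hγ : IsQuotGeodesic A x y γ) :
    ∃ γ' : ℝ → X, γ' 0 = x ∧ γ' 1 = y ∧ QuotLipschitz A (quotEDist A x y) γ' := by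
  classical
  obtain ⟨h0, h1, hγ⟩ := hγ
  let γ' t := if t = 0 then x else if t = 1 then y else γ t
  have hγ' (t : ℝ) : γ' t = γ t ∨ γ' t ∈ A ∧ γ t ∈ A := by
    simp only [γ']
    split_ifs with ht0 ht1
    · subst ht0
      exact h0.imp Eq.symm And.symm
    · subst ht1
      exact h1.imp Eq.symm And.symm
    · exact .inl rfl
  refine ⟨γ', by simp [γ'], by simp [γ'], fun s hs t ht => ?_⟩
  rw [quotEDist_congr_left (hγ' s), quotEDist_comm, quotEDist_congr_left (hγ' t), quotEDist_comm,
    ← ofReal_qdist hA, hγ s t hs ht, ENNReal.ofReal_mul (abs_nonneg _), ofReal_qdist hA]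

theorem exists_quotLipschitz_pair (hA : A.Nonempty)
    (hgeo : ∀ x y : X, (qdist A x y < infDist x A ∨ y ∈ A) → ∃ γ, IsQuotGeodesic A x y γ)
    {x y : X} {c : ℝ≥0∞} (hxy : quotEDist A x y ≤ c) :
    ∃ p q : ℝ → X, QuotLipschitz A c p ∧ QuotLipschitz A c q ∧ p 0 = x ∧ q 0 ∈ A ∧
      (p 1 = y ∧ q 1 ∈ A ∨ p 1 ∈ A ∧ q 1 = y) := by
  have hpath (x y : X) (h : qdist A x y < infDist x A ∨ y ∈ A) :
      ∃ γ : ℝ → X, γ 0 = x ∧ γ 1 = y ∧ QuotLipschitz A (quotEDist A x y) γ :=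
    let ⟨_, hγ⟩ := hgeo x y h
    hγ.exists_quotLipschitz hA
  have ha := hA.some_mem
  by_cases hx : qdist A x y < infDist x A
  · obtain ⟨γ, h0, h1, hγ⟩ := hpath x y (.inl hx)
    exact ⟨γ, fun _ => hA.some, hγ.mono hxy, quotLipschitz_const _ _, h0, ha, .inl ⟨h1, ha⟩⟩
  by_cases hy : qdist A y x < infDist y A
  · obtain ⟨γ, h0, h1, hγ⟩ := hpath y x (.inl hy)
    exact ⟨_, fun _ => hA.some, (hγ.mono (quotEDist_comm (A := A) y x ▸ hxy)).comp_one_sub,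
      quotLipschitz_const _ _, by simpa using h1, ha, .inl ⟨by simpa using h0, ha⟩⟩
  -- Neither point is closer to the other than to `A`: route both through the point `A` of `X/A`.
  have hA_le {x y : X} (h : ¬qdist A x y < infDist x A) (hxy : quotEDist A x y ≤ c) :
      quotEDist A x hA.some ≤ c :=
    calc quotEDist A x hA.some = ENNReal.ofReal (infDist x A) := by
          rw [quotEDist_comm, quotEDist_eq_infEDist_of_mem ha, ofReal_infDist hA]
      _ ≤ ENNReal.ofReal (qdist A x y) := ENNReal.ofReal_le_ofReal (not_lt.1 h)
      _ = quotEDist A x y := ofReal_qdist hA x y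
      _ ≤ c := hxy
  obtain ⟨γx, hx0, hx1, hγx⟩ := hpath x hA.some (.inr ha)
  obtain ⟨γy, hy0, hy1, hγy⟩ := hpath y hA.some (.inr ha)
  exact ⟨γx, _, hγx.mono (hA_le hx hxy),
    (hγy.mono (hA_le hy (quotEDist_comm (A := A) x y ▸ hxy))).comp_one_sub, hx0,
    by simpa [hy1] using ha, .inr ⟨hx1 ▸ ha, by simpa using hy0⟩⟩

end Paths

section Geodesic

variable {X : Type*} [MetricSpace X] {A : Set X}

theorem exists_bdist_path (hA : A.Nonempty)
    (hgeo : ∀ x y : X, (qdist A x y < infDist x A ∨ y ∈ A) → ∃ γ, IsQuotGeodesic A x y γ)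
    {x y : ℕ → X} {r : ℝ≥0∞} (hxy : ∀ i, quotEDist A (x i) (y i) ≤ r) :
    ∃ Γ : ℝ → ℕ → X, bdist A x (Γ 0) = 0 ∧ bdist A y (Γ 1) = 0 ∧
      ∀ s ∈ Icc (0:ℝ) 1, ∀ t ∈ Icc (0:ℝ) 1, bdist A (Γ s) (Γ t) ≤ ENNReal.ofReal |s - t| * r := by
  classical
  choose p q hp hq hp0 hq0 hp1 using fun i => exists_quotLipschitz_pair hA hgeo (hxy i)
  let enc := Equiv.natSumNatEquivNat
  let Γ (t : ℝ) (k : ℕ) : X := Sum.elim (fun i => p i t) (fun i => q i t) (enc.symm k)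
  refine ⟨Γ, ?_, ?_, fun s hs t ht => ?_⟩
  · refine bdist_eq_zero_of_adjoinable hA (fun i => enc (.inl i))
      (enc.injective.comp Sum.inl_injective) (fun i => by simp [Γ, hp0]) fun k hk => .inl ?_
    obtain ⟨i, hi⟩ := enc.exists_symm_eq_inr hk
    simpa [Γ, hi] using hq0 i
  · let slot (i : ℕ) : ℕ ⊕ ℕ := if p i 1 = y i then .inl i else .inr i
    have hslot : Injective slot := fun i i' h => by
      simp only [slot] at h
      split_ifs at h <;> simpa using h
    refine bdist_eq_zero_of_adjoinable hA (fun i => enc (slot i)) (enc.injective.comp hslot)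
      (fun i => ?_) fun k hk => .inl ?_
    · by_cases h : p i 1 = y i
      · simp [Γ, slot, h]
      · simpa [Γ, slot, h] using ((hp1 i).resolve_left (h ·.1)).2
    · rcases h : enc.symm k with i | i
      · have hi : p i 1 ≠ y i := fun hi => hk ⟨i, by simp [slot, hi, ← h]⟩
        simpa [Γ, h] using ((hp1 i).resolve_left (hi ·.1)).1
      · have hi : p i 1 = y i := by_contra fun hi => hk ⟨i, by simp [slot, hi, ← h]⟩
        rcases hp1 i with ⟨-, hq⟩ | ⟨hp, hq⟩
        · simpa [Γ, h] using hq
        · simpa [Γ, h, hq, ← hi] using hp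
  · refine bdist_le_of_injective hA id injective_id (fun k => ?_) fun m hm => (hm ⟨m, rfl⟩).elim
    rcases h : enc.symm k with i | i
    · simpa [Γ, h] using hp i s hs t ht
    · simpa [Γ, h] using hq i s hs t ht

theorem exists_bdist_path_of_pairing (hA : A.Nonempty)
    (hgeo : ∀ x y : X, (qdist A x y < infDist x A ∨ y ∈ A) → ∃ γ, IsQuotGeodesic A x y γ)
    {f g x y : ℕ → X} {r : ℝ≥0∞} (hfx : bdist A f x = 0) (hgy : bdist A g y = 0)
    (hxy : ∀ i, quotEDist A (x i) (y i) ≤ r) :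
    ∃ Γ : ℝ → ℕ → X, Γ 0 = f ∧ Γ 1 = g ∧
      ∀ s ∈ Icc (0:ℝ) 1, ∀ t ∈ Icc (0:ℝ) 1, bdist A (Γ s) (Γ t) ≤ ENNReal.ofReal |s - t| * r := by
  classical
  obtain ⟨Γ, hΓ0, hΓ1, hΓ⟩ := exists_bdist_path hA hgeo hxy
  let Γ' (t : ℝ) := if t = 0 then f else if t = 1 then g else Γ t
  have hΓ' (t : ℝ) : bdist A (Γ' t) (Γ t) = 0 := by
    simp only [Γ']
    split_ifs with h0 h1
    · exact h0 ▸ (bdist_congr hA hfx (bdist_self hA _)).trans hΓ0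
    · exact h1 ▸ (bdist_congr hA hgy (bdist_self hA _)).trans hΓ1
    · exact bdist_self hA _
  refine ⟨Γ', by simp [Γ'], by simp [Γ'], fun s hs t ht => ?_⟩
  rw [bdist_congr hA (hΓ' s) (hΓ' t)]
  exact hΓ s hs t ht

end Geodesic

theorem diagEquiv_refl {X : Type*} [MetricSpace X] (A : Set X) (f : ℕ → X) : DiagEquiv A f f :=
  ⟨Equiv.refl _, fun _ => rfl⟩

theorem stmt_15_general {X : Type*} [MetricSpace X] [ProperSpace X] (A : Set X)
    (hA : A.Nonempty)
    (hgeo : ∀ x y : X, (qdist A x y < Metric.infDist x A ∨ y ∈ A) →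
      ∃ γ : ℝ → X, (γ 0 = x ∨ (γ 0 ∈ A ∧ x ∈ A)) ∧ (γ 1 = y ∨ (γ 1 ∈ A ∧ y ∈ A)) ∧
        ∀ s t : ℝ, s ∈ Set.Icc (0:ℝ) 1 → t ∈ Set.Icc (0:ℝ) 1 →
          qdist A (γ s) (γ t) = |s - t| * qdist A x y) :
    ∀ f g : ℕ → X, IsDiagram A f → IsDiagram A g →
      ∃ Γ : ℝ → ℕ → X, DiagEquiv A (Γ 0) f ∧ DiagEquiv A (Γ 1) g ∧
        (∀ t ∈ Set.Icc (0:ℝ) 1, IsDiagram A (Γ t)) ∧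
        ∀ s t : ℝ, s ∈ Set.Icc (0:ℝ) 1 → t ∈ Set.Icc (0:ℝ) 1 →
          bdist A (Γ s) (Γ t) = ENNReal.ofReal |s - t| * bdist A f g := by
  intro f g hf hg
  have hr := bdist_ne_top hA hf hg
  obtain ⟨σ, hσ, hu, hv⟩ := exists_limit_matching hA hr le_rfl
  obtain ⟨x, y, hfx, hgy, hxy⟩ := exists_pairing hA σ hσ hu hv
  obtain ⟨Γ, rfl, rfl, hΓ⟩ := exists_bdist_path_of_pairing hA hgeo hfx hgy hxy
  refine ⟨Γ, diagEquiv_refl A _, diagEquiv_refl A _, fun t ht => hf.of_bdist_ne_top hA ?_,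
    fun s t hs ht => bdist_eq_of_forall_le hA hr hΓ hs ht⟩
  rw [bdist_eq_of_forall_le hA hr hΓ ht ⟨le_rfl, zero_le_one⟩]
  exact ENNReal.mul_ne_top ENNReal.ofReal_ne_top hr

/-- Suppose `X` is proper and any two points `x, y` of `X/A` with `d(x,y) < d(x,A)` or
`y = A` can be joined by a geodesic in `X/A`.  Then `D_∞(X, A)` is geodesic: any two
diagrams are joined by a constant-speed geodesic for the bottleneck distance. -/
theorem stmt_15 {X : Type*} [MetricSpace X] [ProperSpace X] (A : Set X)
    (hA : A.Nonempty) (hAcl : IsClosed A)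
    (hgeo : ∀ x y : X, (qdist A x y < Metric.infDist x A ∨ y ∈ A) →
      ∃ γ : ℝ → X, (γ 0 = x ∨ (γ 0 ∈ A ∧ x ∈ A)) ∧ (γ 1 = y ∨ (γ 1 ∈ A ∧ y ∈ A)) ∧
        ∀ s t : ℝ, s ∈ Set.Icc (0:ℝ) 1 → t ∈ Set.Icc (0:ℝ) 1 →
          qdist A (γ s) (γ t) = |s - t| * qdist A x y) :
    ∀ f g : ℕ → X, IsDiagram A f → IsDiagram A g →
      ∃ Γ : ℝ → ℕ → X, DiagEquiv A (Γ 0) f ∧ DiagEquiv A (Γ 1) g ∧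
        (∀ t ∈ Set.Icc (0:ℝ) 1, IsDiagram A (Γ t)) ∧
        ∀ s t : ℝ, s ∈ Set.Icc (0:ℝ) 1 → t ∈ Set.Icc (0:ℝ) 1 →
          bdist A (Γ s) (Γ t) = ENNReal.ofReal |s - t| * bdist A f g :=
  stmt_15_general A hA hgeo
end

section
/- Let X be a metric space and a_0 ∈ X a point such that the pseudometric space D_∞(X,{a_0}) with the bottleneck distance is geodesic. Then any two points x, y ∈ X satisfying d(x,y) < d(x,a_0) or y = a_0 can be joined by a geodesic in X. -/
open scoped ENNReal
open Filter Metric Set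

/-!
The one-point diagrams `{x}` and `{y}` are joined by a bottleneck geodesic `Γ`. Comparing `Γ t`
with a one-point end of `Γ` shows that all but one of its points lie near the diagonal `a₀`;
whenever the remaining distinguished point is far enough from `a₀`, every near-optimal matching of
`Γ s` with `Γ t` must pair the two distinguished points, so they trace a path in `X` which is
Lipschitz with the right constant, hence a geodesic. If `d(x,y) < d(x,a₀)` this works on the whole
time interval. For `y = a₀` it only works on the first quarter of it, which yields a segment from
`x` running straight towards `a₀` for a quarter of the distance; concatenating such segments,
whose lengths shrink geometrically, reaches `a₀`.
-/

section

variable {X : Type*} [MetricSpace X]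

lemma exists_matching_of_bdist_lt {A : Set X} {u v : ℕ → X} {r : ℝ}
    (h : bdist A u v < ENNReal.ofReal r) :
    ∃ (α β : ℕ → X) (e : (ℕ ⊕ ℕ) ≃ (ℕ ⊕ ℕ)), (∀ n, α n ∈ A) ∧ (∀ n, β n ∈ A) ∧
      ∀ n, dist (Sum.elim u α n) (Sum.elim v β (e n)) < r := by
  simp only [bdist, iInf_lt_iff] at h
  obtain ⟨α, hα, β, hβ, e, h⟩ := h
  exact ⟨α, β, e, hα, hβ, fun n => edist_lt_ofReal.1 ((le_iSup _ n).trans_lt h)⟩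

lemma exists_dist_lt_or_dist_lt_of_bdist_lt {a : X} {u v : ℕ → X} {r : ℝ}
    (h : bdist {a} u v < ENNReal.ofReal r) (i : ℕ) :
    (∃ j, dist (u i) (v j) < r) ∨ dist (u i) a < r := by
  obtain ⟨α, β, e, -, hβ, he⟩ := exists_matching_of_bdist_lt h
  have hi := he (.inl i)
  rcases hj : e (.inl i) with j | k
  · rw [hj] at hi
    exact .inl ⟨j, hi⟩
  · rw [hj, Sum.elim_inr, mem_singleton_iff.1 (hβ k)] at hi
    exact .inr hi

lemma exists_forall_ne_dist_lt_of_bdist_lt {a : X} {u v : ℕ → X} {r : ℝ} {j₀ : ℕ}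
    (h : bdist {a} u v < ENNReal.ofReal r) (hv : ∀ j, j ≠ j₀ → v j = a) :
    ∃ m, ∀ i, i ≠ m → dist (u i) a < r := by
  obtain ⟨α, β, e, -, hβ, he⟩ := exists_matching_of_bdist_lt h
  have hnear : ∀ i, e (.inl i) ≠ .inl j₀ → dist (u i) a < r := by
    intro i hi
    have hdist := he (.inl i)
    rcases hj : e (.inl i) with j | k
    · simp only [hj, Sum.elim_inl] at hdist
      rwa [hv j fun hjj => hi (hjj ▸ hj)] at hdist
    · rw [hj, Sum.elim_inr, mem_singleton_iff.1 (hβ k)] at hdist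
      exact hdist
  by_cases hm : ∃ m, e (.inl m) = .inl j₀
  · obtain ⟨m, hm⟩ := hm
    exact ⟨m, fun i hi => hnear i fun h => hi (Sum.inl_injective (e.injective (h.trans hm.symm)))⟩
  · exact ⟨0, fun i _ => hnear i fun h => hm ⟨i, h⟩⟩

lemma dist_le_of_bdist_le {a : X} {u v : ℕ → X} {ℓ ρ : ℝ} {i m : ℕ}
    (huv : bdist {a} u v ≤ ENNReal.ofReal ℓ) (hℓ : 0 ≤ ℓ) (hv : ∀ j, j ≠ m → dist (v j) a < ρ)
    (hgap : ℓ + ρ < dist (u i) a) : dist (u i) (v m) ≤ ℓ := by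
  have hρ : 0 ≤ ρ := dist_nonneg.trans (hv (m + 1) (by omega)).le
  refine le_of_forall_gt fun r hr => ?_
  obtain ⟨r', hℓr', hr'r, hr'⟩ : ∃ r', ℓ < r' ∧ r' ≤ r ∧ r' + ρ ≤ dist (u i) a :=
    ⟨min r (dist (u i) a - ρ), lt_min hr (by linarith), min_le_left _ _,
      by linarith [min_le_right r (dist (u i) a - ρ)]⟩
  rcases exists_dist_lt_or_dist_lt_of_bdist_lt
    (huv.trans_lt ((ENNReal.ofReal_lt_ofReal_iff_of_nonneg hℓ).2 hℓr')) i with ⟨j, hj⟩ | hi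
  · obtain rfl | hjm := eq_or_ne j m
    · exact hj.trans_le hr'r
    · linarith [dist_triangle (u i) (v j) a, hv j hjm]
  · linarith

lemma dist_le_mul_of_bdist_le {a : X} {Γ : ℝ → ℕ → X} {L T : ℝ} {m : ℝ → ℕ} {ρ : ℝ → ℝ}
    (hL : 0 ≤ L)
    (hΓ : ∀ s ∈ Icc 0 T, ∀ t ∈ Icc 0 T, bdist {a} (Γ s) (Γ t) ≤ ENNReal.ofReal (|s - t| * L))
    (hρ : ∀ t ∈ Icc 0 T, ∀ i, i ≠ m t → dist (Γ t i) a < ρ t)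
    (hgap : ∀ s ∈ Icc 0 T, ∀ t ∈ Icc 0 T, s ≤ t →
      (t - s) * L + ρ t < dist (Γ 0 (m 0)) a - s * L)
    {s t : ℝ} (hs : s ∈ Icc 0 T) (ht : t ∈ Icc 0 T) :
    dist (Γ s (m s)) (Γ t (m t)) ≤ |s - t| * L := by
  have step : ∀ s ∈ Icc 0 T, ∀ t ∈ Icc 0 T, s ≤ t → (t - s) * L + ρ t < dist (Γ s (m s)) a →
      dist (Γ s (m s)) (Γ t (m t)) ≤ (t - s) * L := by
    intro s hs t ht hst hfar
    have hbdist := hΓ s hs t ht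
    rw [abs_of_nonpos (sub_nonpos.2 hst), neg_sub] at hbdist
    exact dist_le_of_bdist_le hbdist (mul_nonneg (sub_nonneg.2 hst) hL) (hρ t ht) hfar
  have h0 : (0 : ℝ) ∈ Icc 0 T := ⟨le_rfl, hs.1.trans hs.2⟩
  have hfar : ∀ s ∈ Icc 0 T, dist (Γ 0 (m 0)) a - s * L ≤ dist (Γ s (m s)) a := by
    intro s hs
    have h0s := step 0 h0 s hs hs.1 (by simpa using hgap 0 h0 s hs hs.1)
    linarith [dist_triangle (Γ 0 (m 0)) (Γ s (m s)) a]
  rcases le_total s t with hst | hts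
  · rw [abs_of_nonpos (sub_nonpos.2 hst), neg_sub]
    exact step s hs t ht hst ((hgap s hs t ht hst).trans_le (hfar s hs))
  · rw [dist_comm, abs_of_nonneg (sub_nonneg.2 hts)]
    exact step t ht s hs hts ((hgap t ht s hs hts).trans_le (hfar t ht))

/-- The diagram `{x}` on `(X, {a})`; `singletonDiagram a a` represents the empty diagram. -/
def singletonDiagram (a x : X) : ℕ → X := fun n => if n = 0 then x else a

lemma bdist_le_ofReal_of_forall_dist_le {A : Set X} {a : X} (ha : a ∈ A) {u v : ℕ → X} {r : ℝ}
    (h : ∀ n, dist (u n) (v n) ≤ r) : bdist A u v ≤ ENNReal.ofReal r := by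
  refine iInf_le_of_le (fun _ => a) (iInf_le_of_le (fun _ => ha) (iInf_le_of_le (fun _ => a)
    (iInf_le_of_le (fun _ => ha) (iInf_le_of_le (Equiv.refl _) (iSup_le fun n => ?_)))))
  rcases n with n | n
  · simpa [edist_dist] using ENNReal.ofReal_le_ofReal (h n)
  · simp

lemma bdist_singletonDiagram_le (a x y : X) :
    bdist {a} (singletonDiagram a x) (singletonDiagram a y) ≤ ENNReal.ofReal (dist x y) :=
  bdist_le_ofReal_of_forall_dist_le (mem_singleton a) fun n => by
    by_cases hn : n = 0 <;> simp [singletonDiagram, hn]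

lemma isDiagram_singletonDiagram (a x : X) : IsDiagram {a} (singletonDiagram a x) :=
  ⟨singletonDiagram a a, fun n => by simp [singletonDiagram],
    ne_top_of_le_ne_top ENNReal.ofReal_ne_top (bdist_singletonDiagram_le a x a)⟩

lemma DiagEquiv.exists_forall_ne_eq {a x : X} {h : ℕ → X}
    (he : DiagEquiv {a} h (singletonDiagram a x)) : ∃ i, h i = x ∧ ∀ j, j ≠ i → h j = a := by
  obtain ⟨e, he⟩ := he
  have hzero : ∀ p, (e p).1 = 0 := fun p => by
    by_contra hp
    exact (e p).2 (if_neg hp)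
  by_cases hoff : ∃ i, h i ≠ a
  · obtain ⟨i, hi⟩ := hoff
    have hix := he ⟨i, hi⟩
    rw [hzero] at hix
    refine ⟨i, hix.symm, fun j hj => ?_⟩
    by_contra hja
    exact hj (congrArg Subtype.val (e.injective (Subtype.ext
      ((hzero ⟨j, hja⟩).trans (hzero ⟨i, hi⟩).symm))))
  · push Not at hoff
    refine ⟨0, ?_, fun j _ => hoff j⟩
    by_contra hx
    have hx0 : singletonDiagram a x 0 ∉ ({a} : Set X) := by
      simpa [singletonDiagram, hoff 0] using Ne.symm hx
    exact (e.symm ⟨0, hx0⟩).2 (hoff _)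

structure IsDiagramPath (a x y : X) (Γ : ℝ → ℕ → X) : Prop where
  diagEquiv_zero : DiagEquiv {a} (Γ 0) (singletonDiagram a x)
  diagEquiv_one : DiagEquiv {a} (Γ 1) (singletonDiagram a y)
  bdist_le : ∀ s ∈ Icc (0 : ℝ) 1, ∀ t ∈ Icc (0 : ℝ) 1,
    bdist {a} (Γ s) (Γ t) ≤ ENNReal.ofReal (|s - t| * dist x y)

lemma exists_isDiagramPath {a : X}
    (hgeo : ∀ f g : ℕ → X, IsDiagram {a} f → IsDiagram {a} g →
      ∃ Γ : ℝ → ℕ → X, DiagEquiv {a} (Γ 0) f ∧ DiagEquiv {a} (Γ 1) g ∧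
        (∀ t ∈ Set.Icc (0:ℝ) 1, IsDiagram {a} (Γ t)) ∧
        ∀ s t : ℝ, s ∈ Set.Icc (0:ℝ) 1 → t ∈ Set.Icc (0:ℝ) 1 →
          bdist {a} (Γ s) (Γ t) = ENNReal.ofReal |s - t| * bdist {a} f g)
    (x y : X) : ∃ Γ, IsDiagramPath a x y Γ := by
  obtain ⟨Γ, h0, h1, -, hd⟩ :=
    hgeo _ _ (isDiagram_singletonDiagram a x) (isDiagram_singletonDiagram a y)
  refine ⟨Γ, h0, h1, fun s hs t ht => ?_⟩
  rw [hd s t hs ht, ENNReal.ofReal_mul (abs_nonneg _)]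
  gcongr
  exact bdist_singletonDiagram_le a x y

lemma dist_eq_mul_of_dist_le_mul {γ : ℝ → X} {x y : X} (h0 : γ 0 = x) (h1 : γ 1 = y)
    (hγ : ∀ s t : ℝ, s ∈ Icc (0:ℝ) 1 → t ∈ Icc (0:ℝ) 1 → dist (γ s) (γ t) ≤ |s - t| * dist x y) :
    ∀ s t : ℝ, s ∈ Icc (0:ℝ) 1 → t ∈ Icc (0:ℝ) 1 → dist (γ s) (γ t) = |s - t| * dist x y := by
  intro s t hs ht
  refine (hγ s t hs ht).antisymm ?_
  wlog hst : s ≤ t generalizing s t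
  · rw [dist_comm (γ s), abs_sub_comm]
    exact this t s ht hs (le_of_not_ge hst)
  have h0s := hγ 0 s ⟨le_rfl, zero_le_one⟩ hs
  have ht1 := hγ t 1 ht ⟨zero_le_one, le_rfl⟩
  rw [h0, zero_sub, abs_neg, abs_of_nonneg hs.1] at h0s
  rw [h1, abs_of_nonpos (by linarith [ht.2]), neg_sub] at ht1
  rw [abs_of_nonpos (sub_nonpos.2 hst), neg_sub]
  linarith [dist_triangle4 x (γ s) (γ t) y]

structure IsRadialGeodesicOn (a : X) (γ : ℝ → X) (r R : ℝ) : Prop where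
  dist_center : ∀ ρ ∈ Icc r R, dist (γ ρ) a = ρ
  dist_le : ∀ ρ ∈ Icc r R, ∀ σ ∈ Icc r R, dist (γ ρ) (γ σ) ≤ |ρ - σ|

namespace IsRadialGeodesicOn

variable {a : X} {γ : ℝ → X} {r R : ℝ}

lemma dist_eq (hγ : IsRadialGeodesicOn a γ r R) {ρ σ : ℝ} (hρ : ρ ∈ Icc r R)
    (hσ : σ ∈ Icc r R) : dist (γ ρ) (γ σ) = |ρ - σ| :=
  (hγ.dist_le ρ hρ σ hσ).antisymm <| by
    simpa only [hγ.dist_center ρ hρ, hγ.dist_center σ hσ] using abs_dist_sub_le (γ ρ) (γ σ) a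

lemma piecewise {δ : ℝ → X} {r' : ℝ} (hγ : IsRadialGeodesicOn a γ r R)
    (hδ : IsRadialGeodesicOn a δ r' r) (hjoin : δ r = γ r) :
    IsRadialGeodesicOn a (fun ρ => if r ≤ ρ then γ ρ else δ ρ) r' R := by
  have mixed : ∀ ρ ∈ Icc r R, ∀ σ ∈ Icc r' r, dist (γ ρ) (δ σ) ≤ |ρ - σ| := by
    intro ρ hρ σ hσ
    calc dist (γ ρ) (δ σ) ≤ dist (γ ρ) (γ r) + dist (δ r) (δ σ) := by
          rw [← hjoin]; exact dist_triangle _ _ _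
      _ ≤ |ρ - r| + |r - σ| :=
          add_le_add (hγ.dist_le ρ hρ r ⟨le_rfl, hρ.1.trans hρ.2⟩)
            (hδ.dist_le r ⟨hσ.1.trans hσ.2, le_rfl⟩ σ hσ)
      _ = |ρ - σ| := by
          rw [abs_of_nonneg (sub_nonneg.2 hρ.1), abs_of_nonneg (sub_nonneg.2 hσ.2),
            abs_of_nonneg (by linarith [hρ.1, hσ.2])]
          ring
  constructor
  · intro ρ hρ
    split_ifs with h
    · exact hγ.dist_center ρ ⟨h, hρ.2⟩
    · exact hδ.dist_center ρ ⟨hρ.1, (not_le.1 h).le⟩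
  · intro ρ hρ σ hσ
    split_ifs with h₁ h₂ h₂
    · exact hγ.dist_le ρ ⟨h₁, hρ.2⟩ σ ⟨h₂, hσ.2⟩
    · exact mixed ρ ⟨h₁, hρ.2⟩ σ ⟨hσ.1, (not_le.1 h₂).le⟩
    · rw [dist_comm, abs_sub_comm]
      exact mixed σ ⟨h₂, hσ.2⟩ ρ ⟨hρ.1, (not_le.1 h₁).le⟩
    · exact hδ.dist_le ρ ⟨hρ.1, (not_le.1 h₁).le⟩ σ ⟨hσ.1, (not_le.1 h₂).le⟩

lemma dist_comp_eq (hγ : IsRadialGeodesicOn a γ 0 R) (hR : 0 ≤ R) {s t : ℝ}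
    (hs : s ∈ Icc (0:ℝ) 1) (ht : t ∈ Icc (0:ℝ) 1) :
    dist (γ ((1 - s) * R)) (γ ((1 - t) * R)) = |s - t| * R := by
  have hmem : ∀ s ∈ Icc (0:ℝ) 1, (1 - s) * R ∈ Icc 0 R := fun s hs =>
    ⟨mul_nonneg (by linarith [hs.2]) hR, by nlinarith [hs.1]⟩
  rw [hγ.dist_eq (hmem s hs) (hmem t ht), show (1 - s) * R - (1 - t) * R = (t - s) * R by ring,
    abs_mul, abs_of_nonneg hR, abs_sub_comm]

end IsRadialGeodesicOn

lemma exists_seq_isRadialGeodesicOn {a : X} {c : ℝ} (hc₀ : 0 < c) (hc₁ : c < 1)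
    (hseg : ∀ z, z ≠ a → ∃ δ : ℝ → X, δ (dist z a) = z ∧
      IsRadialGeodesicOn a δ (c * dist z a) (dist z a))
    {x : X} (hx : x ≠ a) :
    ∃ g : ℕ → ℝ → X,
      (∀ k, g k (dist x a) = x ∧ IsRadialGeodesicOn a (g k) (c ^ k * dist x a) (dist x a)) ∧
      ∀ k j, k ≤ j → ∀ ρ, c ^ k * dist x a ≤ ρ → g j ρ = g k ρ := by
  set R := dist x a
  have hR : 0 < R := dist_pos.2 hx
  choose! δ hδx hδ using hseg
  let g : ℕ → ℝ → X := fun k => Nat.rec (fun _ => x)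
    (fun k gk ρ => if c ^ k * R ≤ ρ then gk ρ else δ (gk (c ^ k * R)) ρ) k
  have hg : ∀ k, g k R = x ∧ IsRadialGeodesicOn a (g k) (c ^ k * R) R := by
    intro k
    induction k with
    | zero =>
      refine ⟨rfl, fun ρ hρ => ?_, fun ρ _ σ _ => by simp [g]⟩
      rw [pow_zero, one_mul] at hρ
      simp [g, le_antisymm hρ.2 hρ.1, R]
    | succ k ih =>
      obtain ⟨hx, hgk⟩ := ih
      have hr : c ^ k * R ∈ Icc (c ^ k * R) R :=
        ⟨le_rfl, mul_le_of_le_one_left hR.le (pow_le_one₀ hc₀.le hc₁.le)⟩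
      have hz := hgk.dist_center _ hr
      have hza : g k (c ^ k * R) ≠ a := fun h => by
        rw [h, dist_self] at hz
        exact (mul_pos (pow_pos hc₀ k) hR).ne hz
      have hseg := hδ _ hza
      rw [hz] at hseg
      have hjoin := hδx _ hza
      rw [hz] at hjoin
      refine ⟨show (if c ^ k * R ≤ R then g k R else _) = x by rw [if_pos hr.2, hx], ?_⟩
      rw [pow_succ, mul_comm _ c, mul_assoc]
      exact hgk.piecewise hseg hjoin
  have hstable : ∀ k j, k ≤ j → ∀ ρ, c ^ k * R ≤ ρ → g j ρ = g k ρ := by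
    intro k j hkj ρ hρ
    induction j, hkj using Nat.le_induction with
    | base => rfl
    | succ j hkj ih =>
      show (if c ^ j * R ≤ ρ then g j ρ else _) = g k ρ
      rw [if_pos ((mul_le_mul_of_nonneg_right (pow_le_pow_of_le_one hc₀.le hc₁.le hkj)
        hR.le).trans hρ), ih]
  exact ⟨g, hg, hstable⟩

lemma exists_isRadialGeodesicOn_of_forall {a : X} {c : ℝ} (hc₀ : 0 < c) (hc₁ : c < 1)
    (hseg : ∀ z, z ≠ a → ∃ δ : ℝ → X, δ (dist z a) = z ∧
      IsRadialGeodesicOn a δ (c * dist z a) (dist z a))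
    (x : X) : ∃ γ : ℝ → X, γ (dist x a) = x ∧ IsRadialGeodesicOn a γ 0 (dist x a) := by
  obtain rfl | hx := eq_or_ne x a
  · refine ⟨fun _ => x, rfl, ⟨fun ρ hρ => ?_, fun ρ _ σ _ => by simp⟩⟩
    rw [dist_self] at hρ ⊢
    exact (le_antisymm hρ.2 hρ.1).symm
  obtain ⟨g, hg, hstable⟩ := exists_seq_isRadialGeodesicOn hc₀ hc₁ hseg hx
  set R := dist x a
  have hR : 0 < R := dist_pos.2 hx
  have hidx : ∀ ρ, 0 < ρ → ∃ k, c ^ k * R ≤ ρ := fun ρ hρ =>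
    (exists_pow_lt_of_lt_one (div_pos hρ hR) hc₁).imp fun k hk => ((lt_div_iff₀ hR).1 hk).le
  choose! N hN using hidx
  let γ : ℝ → X := fun ρ => if 0 < ρ then g (N ρ) ρ else a
  have hγ0 : γ 0 = a := if_neg (lt_irrefl 0)
  have hγg : ∀ ρ, 0 < ρ → ρ ≤ R → ∀ k, N ρ ≤ k → γ ρ = g k ρ ∧ ρ ∈ Icc (c ^ k * R) R :=
    fun ρ hρ hρR k hk =>
      ⟨(if_pos hρ).trans (hstable _ _ hk ρ (hN ρ hρ)).symm,
        (mul_le_mul_of_nonneg_right (pow_le_pow_of_le_one hc₀.le hc₁.le hk) hR.le).trans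
          (hN ρ hρ), hρR⟩
  have center : ∀ ρ ∈ Icc 0 R, dist (γ ρ) a = ρ := by
    intro ρ hρ
    obtain rfl | hρ0 := hρ.1.eq_or_lt
    · rw [hγ0, dist_self]
    · obtain ⟨h, hmem⟩ := hγg ρ hρ0 hρ.2 _ le_rfl
      rw [h]
      exact (hg _).2.dist_center ρ hmem
  refine ⟨γ, (hγg R hR le_rfl _ le_rfl).1.trans (hg _).1, center, fun ρ hρ σ hσ => ?_⟩
  obtain rfl | hσ0 := hσ.1.eq_or_lt
  · rw [hγ0, center ρ hρ, sub_zero, abs_of_nonneg hρ.1]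
  obtain rfl | hρ0 := hρ.1.eq_or_lt
  · rw [hγ0, dist_comm, center σ hσ, zero_sub, abs_neg, abs_of_nonneg hσ.1]
  obtain ⟨hρg, hρk⟩ := hγg ρ hρ0 hρ.2 _ (le_max_left (N ρ) (N σ))
  obtain ⟨hσg, hσk⟩ := hγg σ hσ0 hσ.2 _ (le_max_right (N ρ) (N σ))
  rw [hρg, hσg]
  exact (hg _).2.dist_le ρ hρk σ hσk

namespace IsDiagramPath

variable {a x y : X} {Γ : ℝ → ℕ → X}

lemma exists_geodesic (hΓ : IsDiagramPath a x y Γ) (hxy : dist x y < dist x a) :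
    ∃ γ : ℝ → X, γ 0 = x ∧ γ 1 = y ∧ ∀ s t : ℝ, s ∈ Icc (0:ℝ) 1 → t ∈ Icc (0:ℝ) 1 →
      dist (γ s) (γ t) = |s - t| * dist x y := by
  set d := dist x y
  set gap := dist x a - d
  obtain ⟨i₀, hx₀, hi₀⟩ := hΓ.diagEquiv_zero.exists_forall_ne_eq
  obtain ⟨i₁, hy₁, hi₁⟩ := hΓ.diagEquiv_one.exists_forall_ne_eq
  have hfar : ∀ t ∈ Icc (0:ℝ) 1, ∃ k, ∀ i, i ≠ k → dist (Γ t i) a < (1 - t) * d + gap / 2 := by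
    intro t ht
    refine exists_forall_ne_dist_lt_of_bdist_lt
      ((hΓ.bdist_le t ht 1 ⟨zero_le_one, le_rfl⟩).trans_lt ?_) hi₁
    rw [abs_of_nonpos (by linarith [ht.2]), neg_sub,
      ENNReal.ofReal_lt_ofReal_iff_of_nonneg (mul_nonneg (by linarith [ht.2]) dist_nonneg)]
    linarith
  choose! m hm using hfar
  have hm0 : m 0 = i₀ := by
    by_contra hne
    have := hm 0 ⟨le_rfl, zero_le_one⟩ i₀ (Ne.symm hne)
    rw [hx₀] at this
    linarith
  have hm1 : m 1 = i₁ := by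
    by_contra hne
    have := hm 1 ⟨zero_le_one, le_rfl⟩ i₁ (Ne.symm hne)
    rw [hy₁] at this
    linarith [dist_triangle x y a]
  have hγ0 : Γ 0 (m 0) = x := by rw [hm0, hx₀]
  have hγ1 : Γ 1 (m 1) = y := by rw [hm1, hy₁]
  refine ⟨fun t => Γ t (m t), hγ0, hγ1, dist_eq_mul_of_dist_le_mul hγ0 hγ1 fun s t hs ht =>
    dist_le_mul_of_bdist_le dist_nonneg hΓ.bdist_le hm (fun s _ t _ _ => ?_) hs ht⟩
  rw [hγ0]
  linarith

lemma exists_radialSegment (hΓ : IsDiagramPath a x a Γ) (hx : x ≠ a) :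
    ∃ δ : ℝ → X, δ (dist x a) = x ∧ IsRadialGeodesicOn a δ (3 / 4 * dist x a) (dist x a) := by
  set D := dist x a
  have hD : 0 < D := dist_pos.2 hx
  obtain ⟨i₀, hx₀, hi₀⟩ := hΓ.diagEquiv_zero.exists_forall_ne_eq
  obtain ⟨i₁, ha₁, hi₁⟩ := hΓ.diagEquiv_one.exists_forall_ne_eq
  have hempty : ∀ j, Γ 1 j = a := fun j => (eq_or_ne j i₁).elim (· ▸ ha₁) (hi₁ j)
  have hfar : ∀ t ∈ Icc (0:ℝ) 1, ∃ k, ∀ i, i ≠ k → dist (Γ t i) a < t * D + D / 4 := by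
    intro t ht
    refine exists_forall_ne_dist_lt_of_bdist_lt
      ((hΓ.bdist_le t ht 0 ⟨le_rfl, zero_le_one⟩).trans_lt ?_) hi₀
    rw [sub_zero, abs_of_nonneg ht.1,
      ENNReal.ofReal_lt_ofReal_iff_of_nonneg (mul_nonneg ht.1 hD.le)]
    linarith
  choose! m hm using hfar
  have hm0 : m 0 = i₀ := by
    by_contra hne
    have := hm 0 ⟨le_rfl, zero_le_one⟩ i₀ (Ne.symm hne)
    rw [hx₀] at this
    linarith
  have hI : Icc (0:ℝ) (1 / 4) ⊆ Icc 0 1 := Icc_subset_Icc_right (by norm_num)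
  -- on `[0, 1/4]` the gap condition reads `(2 t + 1/4) D < D`
  have hlip : ∀ s ∈ Icc (0:ℝ) (1 / 4), ∀ t ∈ Icc (0:ℝ) (1 / 4),
      dist (Γ s (m s)) (Γ t (m t)) ≤ |s - t| * D := fun s hs t ht =>
    dist_le_mul_of_bdist_le hD.le (fun s hs t ht => hΓ.bdist_le s (hI hs) t (hI ht))
      (fun t ht => hm t (hI ht))
      (fun s _ t ht _ => by rw [hm0, hx₀]; nlinarith [mul_nonneg hD.le (sub_nonneg.2 ht.2)]) hs ht
  have hrad : ∀ t ∈ Icc (0:ℝ) (1 / 4), dist (Γ t (m t)) a = (1 - t) * D := by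
    intro t ht
    apply le_antisymm
    · refine le_of_forall_gt fun r hr => ?_
      have hbdist := hΓ.bdist_le t (hI ht) 1 ⟨zero_le_one, le_rfl⟩
      rw [abs_of_nonpos (by linarith [ht.2]), neg_sub] at hbdist
      rcases exists_dist_lt_or_dist_lt_of_bdist_lt (hbdist.trans_lt
          ((ENNReal.ofReal_lt_ofReal_iff_of_nonneg
            (mul_nonneg (by linarith [ht.2]) hD.le)).2 hr)) (m t) with ⟨j, hj⟩ | hj
      · rwa [hempty] at hj
      · exact hj
    · have h0t := hlip 0 ⟨le_rfl, by norm_num⟩ t ht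
      rw [hm0, hx₀, zero_sub, abs_neg, abs_of_nonneg ht.1] at h0t
      linarith [dist_triangle x (Γ t (m t)) a]
  have htime : ∀ ρ ∈ Icc (3 / 4 * D) D, 1 - ρ / D ∈ Icc (0:ℝ) (1 / 4) := fun ρ hρ =>
    ⟨by rw [sub_nonneg, div_le_one hD]; exact hρ.2,
      by rw [sub_le_comm, le_div_iff₀ hD]; linarith [hρ.1]⟩
  refine ⟨fun ρ => Γ (1 - ρ / D) (m (1 - ρ / D)), by simp [div_self hD.ne', hm0, hx₀],
    fun ρ hρ => ?_, fun ρ hρ σ hσ => ?_⟩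
  · rw [hrad _ (htime ρ hρ)]
    field_simp
    ring
  · refine (hlip _ (htime ρ hρ) _ (htime σ hσ)).trans_eq ?_
    rw [show 1 - ρ / D - (1 - σ / D) = (σ - ρ) / D by ring, abs_div, abs_of_pos hD,
      div_mul_cancel₀ _ hD.ne', abs_sub_comm]

end IsDiagramPath

lemma exists_geodesic_to_of_isDiagramPath {a : X} (hpath : ∀ z, ∃ Γ, IsDiagramPath a z a Γ)
    (x : X) : ∃ γ : ℝ → X, γ 0 = x ∧ γ 1 = a ∧ ∀ s t : ℝ, s ∈ Icc (0:ℝ) 1 → t ∈ Icc (0:ℝ) 1 →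
      dist (γ s) (γ t) = |s - t| * dist x a := by
  obtain ⟨γ, hγx, hγ⟩ := exists_isRadialGeodesicOn_of_forall (c := 3 / 4) (by norm_num)
    (by norm_num) (fun z hz => (hpath z).elim fun _ hΓ => hΓ.exists_radialSegment hz) x
  refine ⟨fun θ => γ ((1 - θ) * dist x a), by simpa using hγx, ?_,
    fun s t hs ht => hγ.dist_comp_eq dist_nonneg hs ht⟩
  simpa using dist_eq_zero.1 (hγ.dist_center 0 ⟨le_rfl, dist_nonneg⟩)

end

/-- If `D_∞(X, {a₀})` is geodesic, then any two points `x, y ∈ X` with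
`d(x,y) < d(x,a₀)` or `y = a₀` can be joined by a constant-speed geodesic in `X`. -/
theorem stmt_16 {X : Type*} [MetricSpace X] (a₀ : X)
    (hgeo : ∀ f g : ℕ → X, IsDiagram {a₀} f → IsDiagram {a₀} g →
      ∃ Γ : ℝ → ℕ → X, DiagEquiv {a₀} (Γ 0) f ∧ DiagEquiv {a₀} (Γ 1) g ∧
        (∀ t ∈ Set.Icc (0:ℝ) 1, IsDiagram {a₀} (Γ t)) ∧
        ∀ s t : ℝ, s ∈ Set.Icc (0:ℝ) 1 → t ∈ Set.Icc (0:ℝ) 1 →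
          bdist {a₀} (Γ s) (Γ t) = ENNReal.ofReal |s - t| * bdist {a₀} f g) :
    ∀ x y : X, (dist x y < dist x a₀ ∨ y = a₀) →
      ∃ γ : ℝ → X, γ 0 = x ∧ γ 1 = y ∧
        ∀ s t : ℝ, s ∈ Set.Icc (0:ℝ) 1 → t ∈ Set.Icc (0:ℝ) 1 →
          dist (γ s) (γ t) = |s - t| * dist x y := by
  intro x y hxy
  rcases hxy with hlt | rfl
  · obtain ⟨Γ, hΓ⟩ := exists_isDiagramPath hgeo x y
    exact hΓ.exists_geodesic hlt
  · exact exists_geodesic_to_of_isDiagramPath (fun z => exists_isDiagramPath hgeo z y) x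
end

section
/- If X is a proper geodesic metric space and A ⊆ X is a nonempty closed subset, then the quotient metric space X/A is geodesic. -/
open scoped ENNReal
open Filter Metric Set

/-!
A path `σ` on `[0, 1]` with `d(σ s, σ t) ≤ |s - t| d(σ 0, σ 1)` is a geodesic: the triangle
inequality through `σ s` and `σ t` gives the reverse bound. So it suffices to find paths of speed
at most `d_{X/A}(x, y)`. If `d(x, y) ≤ d(x, A) + d(y, A)`, a geodesic of `X` will do, since
`d_{X/A} ≤ d`. Otherwise run at speed `d(x, A) + d(y, A)` along a geodesic from `x` to a nearest
point `p ∈ A` (which exists as `X` is proper), then along one from a nearest point `q ∈ A` to `y`: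
two times on the same leg are bounded by the distance in `X`, times on different legs by the
distances to `p` and `q`, since the jump from `p` to `q` inside `A` costs nothing.
-/

theorem abs_sub_mul_eq_of_le_sub_mul {α : Type*} (d : α → α → ℝ) (hcomm : ∀ x y, d x y = d y x)
    (htri : ∀ x y z, d x z ≤ d x y + d y z) {σ : ℝ → α}
    (hle : ∀ s t : ℝ, s ∈ Icc (0:ℝ) 1 → t ∈ Icc (0:ℝ) 1 → s ≤ t →
      d (σ s) (σ t) ≤ (t - s) * d (σ 0) (σ 1))
    {s t : ℝ} (hs : s ∈ Icc (0:ℝ) 1) (ht : t ∈ Icc (0:ℝ) 1) :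
    d (σ s) (σ t) = |s - t| * d (σ 0) (σ 1) := by
  have h0 : (0:ℝ) ∈ Icc (0:ℝ) 1 := left_mem_Icc.2 zero_le_one
  have h1 : (1:ℝ) ∈ Icc (0:ℝ) 1 := right_mem_Icc.2 zero_le_one
  have key : ∀ s t, s ∈ Icc (0:ℝ) 1 → t ∈ Icc (0:ℝ) 1 → s ≤ t →
      d (σ s) (σ t) = (t - s) * d (σ 0) (σ 1) := by
    intro s t hs ht hst
    have h0s := hle 0 s h0 hs hs.1
    have ht1 := hle t 1 ht h1 ht.2
    have := (htri (σ 0) (σ s) (σ 1)).trans (add_le_add_right (htri (σ s) (σ t) (σ 1)) _)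
    linarith [hle s t hs ht hst]
  rcases le_total s t with hst | hts
  · rw [key s t hs ht hst, abs_of_nonpos (sub_nonpos.2 hst), neg_sub]
  · rw [hcomm, key t s ht hs hts, abs_of_nonneg (sub_nonneg.2 hts)]

section Quotient

variable {X : Type*} [MetricSpace X] {A : Set X}

theorem qdist_comm (x y : X) : qdist A x y = qdist A y x := by
  rw [qdist, qdist, dist_comm, add_comm]

theorem qdist_le_dist (x y : X) : qdist A x y ≤ dist x y := min_le_left _ _

theorem qdist_le_infDist_add_infDist (x y : X) : qdist A x y ≤ infDist x A + infDist y A :=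
  min_le_right _ _

theorem qdist_triangle (x y z : X) : qdist A x z ≤ qdist A x y + qdist A y z := by
  have hx : infDist x A ≤ infDist y A + dist x y := infDist_le_infDist_add_dist
  have hz : infDist z A ≤ infDist y A + dist z y := infDist_le_infDist_add_dist
  have hxyz := dist_triangle x y z
  rw [dist_comm z y] at hz
  simp only [qdist]
  rcases min_choice (dist x y) (infDist x A + infDist y A) with h | h <;>
  rcases min_choice (dist y z) (infDist y A + infDist z A) with h' | h' <;>
  rw [h, h'] <;>
  refine min_le_iff.2 ?_ <;>
  first | exact Or.inl (by linarith) | exact Or.inr (by linarith [infDist_nonneg (x := y) (s := A)])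

theorem qdist_of_mem_left {x : X} (hx : x ∈ A) (y : X) : qdist A x y = infDist y A := by
  rw [qdist, infDist_zero_of_mem hx, zero_add, dist_comm]
  exact min_eq_right (infDist_le_dist_of_mem hx)

theorem qdist_congr_left {x x' : X} (hx : x' = x ∨ (x' ∈ A ∧ x ∈ A)) (y : X) :
    qdist A x' y = qdist A x y := by
  rcases hx with rfl | ⟨hx', hx⟩
  · rfl
  · rw [qdist_of_mem_left hx', qdist_of_mem_left hx]

theorem qdist_congr {x x' y y' : X} (hx : x' = x ∨ (x' ∈ A ∧ x ∈ A))
    (hy : y' = y ∨ (y' ∈ A ∧ y ∈ A)) : qdist A x' y' = qdist A x y := by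
  rw [qdist_congr_left hx, qdist_comm, qdist_congr_left hy, qdist_comm]

end Quotient

section Geodesic

variable {X : Type*} [MetricSpace X]

theorem exists_rescaled_geodesic {x y : X} (hgeo : ∃ γ : ℝ → X, γ 0 = x ∧ γ 1 = y ∧
      ∀ s t : ℝ, s ∈ Icc (0:ℝ) 1 → t ∈ Icc (0:ℝ) 1 → dist (γ s) (γ t) = |s - t| * dist x y)
    {m D : ℝ} (hm : 0 ≤ m) (hxy : dist x y = m * D) :
    ∃ ρ : ℝ → X, ρ 0 = x ∧ ρ m = y ∧
      ∀ s t : ℝ, s ∈ Icc 0 m → t ∈ Icc 0 m → dist (ρ s) (ρ t) = |s - t| * D := by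
  rcases hm.eq_or_lt with rfl | hm
  · refine ⟨fun _ => x, rfl, dist_eq_zero.1 (by simpa using hxy), fun s t hs ht => ?_⟩
    simp [le_antisymm hs.2 hs.1, le_antisymm ht.2 ht.1]
  obtain ⟨γ, hγ0, hγ1, hγ⟩ := hgeo
  have hI : ∀ s ∈ Icc 0 m, s / m ∈ Icc (0:ℝ) 1 := fun s hs =>
    ⟨div_nonneg hs.1 hm.le, (div_le_one hm).2 hs.2⟩
  refine ⟨fun s => γ (s / m), by simpa using hγ0, by simpa [hm.ne'] using hγ1,
    fun s t hs ht => ?_⟩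
  rw [hγ _ _ (hI s hs) (hI t ht), hxy, ← sub_div, abs_div, abs_of_pos hm]
  field_simp

variable (A : Set X)

theorem exists_path_qdist_le_of_dist_le {x y : X} (hgeo : ∃ γ : ℝ → X, γ 0 = x ∧ γ 1 = y ∧
      ∀ s t : ℝ, s ∈ Icc (0:ℝ) 1 → t ∈ Icc (0:ℝ) 1 → dist (γ s) (γ t) = |s - t| * dist x y)
    (h : dist x y ≤ infDist x A + infDist y A) :
    ∃ σ : ℝ → X, σ 0 = x ∧ σ 1 = y ∧ ∀ s t : ℝ, s ∈ Icc (0:ℝ) 1 → t ∈ Icc (0:ℝ) 1 → s ≤ t →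
      qdist A (σ s) (σ t) ≤ (t - s) * qdist A x y := by
  obtain ⟨γ, hγ0, hγ1, hγ⟩ := hgeo
  refine ⟨γ, hγ0, hγ1, fun s t hs ht hst => ?_⟩
  rw [show qdist A x y = dist x y from min_eq_left h, ← abs_of_nonneg (sub_nonneg.2 hst),
    abs_sub_comm, ← hγ s t hs ht]
  exact qdist_le_dist _ _

theorem exists_path_qdist_le_through [ProperSpace X] (hA : A.Nonempty) (hAcl : IsClosed A)
    (hgeo : ∀ x y : X, ∃ γ : ℝ → X, γ 0 = x ∧ γ 1 = y ∧
      ∀ s t : ℝ, s ∈ Icc (0:ℝ) 1 → t ∈ Icc (0:ℝ) 1 → dist (γ s) (γ t) = |s - t| * dist x y)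
    (x y : X) :
    ∃ σ : ℝ → X, σ 0 = x ∧ (σ 1 = y ∨ (σ 1 ∈ A ∧ y ∈ A)) ∧
      ∀ s t : ℝ, s ∈ Icc (0:ℝ) 1 → t ∈ Icc (0:ℝ) 1 → s ≤ t →
        qdist A (σ s) (σ t) ≤ (t - s) * (infDist x A + infDist y A) := by
  obtain ⟨D, hDdef⟩ : ∃ D, D = infDist x A + infDist y A := ⟨_, rfl⟩
  obtain ⟨m, hmdef⟩ : ∃ m, m = infDist x A / D := ⟨_, rfl⟩
  have hm : m * D = infDist x A := hmdef ▸ div_mul_cancel_of_imp fun h => by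
    linarith [infDist_nonneg (x := x) (s := A), infDist_nonneg (x := y) (s := A)]
  have hD0 : 0 ≤ D := hDdef ▸ add_nonneg infDist_nonneg infDist_nonneg
  have hm0 : 0 ≤ m := hmdef ▸ div_nonneg infDist_nonneg hD0
  have hm1 : 0 ≤ 1 - m :=
    hmdef ▸ sub_nonneg.2 (div_le_one_of_le₀ (hDdef ▸ le_add_of_nonneg_right infDist_nonneg) hD0)
  obtain ⟨p, hpA, hxp⟩ := hAcl.exists_infDist_eq_dist hA x
  obtain ⟨q, hqA, hyq⟩ := hAcl.exists_infDist_eq_dist hA y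
  have hxp' : dist x p = m * D := by rw [← hxp, hm]
  have hyq' : dist y q = (1 - m) * D := by rw [← hyq]; linear_combination hm - hDdef
  obtain ⟨ρ₁, hρ₁0, hρ₁m, hρ₁⟩ := exists_rescaled_geodesic (hgeo x p) hm0 hxp'
  obtain ⟨ρ₂, hρ₂0, hρ₂m, hρ₂⟩ := exists_rescaled_geodesic (hgeo y q) hm1 hyq'
  refine ⟨fun s => if s ≤ m then ρ₁ s else ρ₂ (1 - s), by simp [hm0, hρ₁0], ?_, ?_⟩
  · by_cases h1m : 1 ≤ m
    · have hm : m = 1 := le_antisymm (by linarith) h1m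
      have hyA : y ∈ A := dist_eq_zero.1 (by rw [hyq', hm, sub_self, zero_mul]) ▸ hqA
      exact Or.inr ⟨by simpa [h1m, ← hm, hρ₁m] using hpA, hyA⟩
    · exact Or.inl (by simp [h1m, hρ₂0])
  intro s t hs ht hst
  rw [← hDdef]
  by_cases htm : t ≤ m
  · simp only [htm, hst.trans htm, if_true]
    calc qdist A (ρ₁ s) (ρ₁ t) ≤ dist (ρ₁ s) (ρ₁ t) := qdist_le_dist _ _
      _ = (t - s) * D := by
        rw [hρ₁ s t ⟨hs.1, hst.trans htm⟩ ⟨ht.1, htm⟩, abs_sub_comm,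
          abs_of_nonneg (sub_nonneg.2 hst)]
  have hI : ∀ u ∈ Icc (0:ℝ) 1, ¬u ≤ m → 1 - u ∈ Icc 0 (1 - m) := fun u hu hum =>
    ⟨sub_nonneg.2 hu.2, by linarith [not_le.1 hum]⟩
  by_cases hsm : s ≤ m
  · simp only [htm, hsm, if_true, if_false]
    calc qdist A (ρ₁ s) (ρ₂ (1 - t))
        ≤ infDist (ρ₁ s) A + infDist (ρ₂ (1 - t)) A := qdist_le_infDist_add_infDist _ _
      _ ≤ dist (ρ₁ s) (ρ₁ m) + dist (ρ₂ (1 - t)) (ρ₂ (1 - m)) := by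
        rw [hρ₁m, hρ₂m]
        exact add_le_add (infDist_le_dist_of_mem hpA) (infDist_le_dist_of_mem hqA)
      _ = (t - s) * D := by
        rw [hρ₁ s m ⟨hs.1, hsm⟩ ⟨hm0, le_rfl⟩, hρ₂ _ _ (hI t ht htm) ⟨hm1, le_rfl⟩,
          abs_of_nonpos (by linarith), abs_of_nonpos (by linarith)]
        ring
  · simp only [htm, hsm, if_false]
    calc qdist A (ρ₂ (1 - s)) (ρ₂ (1 - t)) ≤ dist (ρ₂ (1 - s)) (ρ₂ (1 - t)) := qdist_le_dist _ _
      _ = (t - s) * D := by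
        rw [hρ₂ _ _ (hI s hs hsm) (hI t ht htm), sub_sub_sub_cancel_left,
          abs_of_nonneg (sub_nonneg.2 hst)]

end Geodesic

/-- If `X` is a proper geodesic metric space and `A ⊆ X` is nonempty and closed, then the
quotient metric space `X/A` is geodesic. -/
theorem stmt_17 {X : Type*} [MetricSpace X] [ProperSpace X]
    (hXgeo : ∀ x y : X, ∃ γ : ℝ → X, γ 0 = x ∧ γ 1 = y ∧
      ∀ s t : ℝ, s ∈ Set.Icc (0:ℝ) 1 → t ∈ Set.Icc (0:ℝ) 1 →
        dist (γ s) (γ t) = |s - t| * dist x y)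
    (A : Set X) (hA : A.Nonempty) (hAcl : IsClosed A) :
    ∀ x y : X, ∃ γ : ℝ → X,
      (γ 0 = x ∨ (γ 0 ∈ A ∧ x ∈ A)) ∧ (γ 1 = y ∨ (γ 1 ∈ A ∧ y ∈ A)) ∧
      ∀ s t : ℝ, s ∈ Set.Icc (0:ℝ) 1 → t ∈ Set.Icc (0:ℝ) 1 →
        qdist A (γ s) (γ t) = |s - t| * qdist A x y := by
  intro x y
  obtain ⟨σ, hσ0, hσ1, hσ⟩ : ∃ σ : ℝ → X,
      (σ 0 = x ∨ (σ 0 ∈ A ∧ x ∈ A)) ∧ (σ 1 = y ∨ (σ 1 ∈ A ∧ y ∈ A)) ∧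
      ∀ s t : ℝ, s ∈ Icc (0:ℝ) 1 → t ∈ Icc (0:ℝ) 1 → s ≤ t →
        qdist A (σ s) (σ t) ≤ (t - s) * qdist A x y := by
    rcases le_total (dist x y) (infDist x A + infDist y A) with h | h
    · obtain ⟨σ, h0, h1, hσ⟩ := exists_path_qdist_le_of_dist_le A (hXgeo x y) h
      exact ⟨σ, Or.inl h0, Or.inl h1, hσ⟩
    · obtain ⟨σ, h0, h1, hσ⟩ := exists_path_qdist_le_through A hA hAcl hXgeo x y
      rw [qdist, min_eq_right h]
      exact ⟨σ, Or.inl h0, h1, hσ⟩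
  have hD : qdist A (σ 0) (σ 1) = qdist A x y := qdist_congr hσ0 hσ1
  refine ⟨σ, hσ0, hσ1, fun s t hs ht => hD ▸ ?_⟩
  exact abs_sub_mul_eq_of_le_sub_mul (qdist A) qdist_comm qdist_triangle
    (fun s t hs ht hst => hD ▸ hσ s t hs ht hst) hs ht
end

section
/- Let X = c_0 be the space of real sequences converging to 0 with the supremum metric and A = {0}. Then X is a geodesic metric space, but the pseudometric space D_∞(X,A) with the bottleneck distance is not geodesic: the diagrams σ_± = {{α_F : F ∈ F_±}}, where for a finite set F ⊆ ℤ_{≥1} the sequence α_F has n-th entry 1 + 1/n for n ∈ F and 0 otherwise, and F_+ (resp. F_−) is the collection of finite subsets of even (resp. odd) cardinality, satisfy d_∞(σ_+,σ_−) = 1 but cannot be joined by a geodesic in D_∞(X,A). -/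
/-!
A segment `t ↦ x + t • (y - x)` is a geodesic in any normed space, so `c₀` is geodesic.

Toggling the coordinate `k` matches `σ₊` with `σ₋` at cost `1 + 1/k`, so `d(σ₊, σ₋) ≤ 1`;
conversely `α_{1} = alphaF {0} ∈ σ₋` is at distance `2` from the diagonal and at distance `≥ 1` from every
`α_F` with `F` even, so `d(σ₊, σ₋) = 1`.

A geodesic would give a midpoint `μ` with `d(σ±, μ) ≤ 1/2`. The partner `v ∈ μ` of `α_{1}` is far
from the diagonal, so for every `ε > 0` it is within `1/2 + ε` of some `α_F` (`F` even) and some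
`α_G` (`G` odd). Then `F ≠ G` differ at a coordinate `k` with `1 + 1/k ≤ 1 + 2ε`, and there
`v_k ≥ 1/2 - ε`; for small `ε` this contradicts `v_k → 0`.
-/

open scoped ENNReal
open Filter Metric Set

open scoped ZeroAtInfty

/-- For a finite set `F` of positive integers (encoded here by shifting indices so that the
paper's coordinate `n ≥ 1` is our coordinate `n - 1`), the sequence `α_F ∈ c₀` whose
`n`-th entry is `1 + 1/n` for `n ∈ F` and `0` otherwise. -/
noncomputable def alphaF (F : Finset ℕ) : C₀(ℕ, ℝ) :=
  { toFun := fun n => if n ∈ F then 1 + 1/((n:ℝ)+1) else 0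
    continuous_toFun := continuous_of_discreteTopology
    zero_at_infty' := by
      have h : ∀ᶠ n in Filter.cocompact ℕ, (if n ∈ F then 1 + 1/((n:ℝ)+1) else 0) = 0 := by
        rw [Filter.cocompact_eq_cofinite, Filter.eventually_cofinite]
        apply Set.Finite.subset F.finite_toSet
        intro n hn
        simp only [Set.mem_setOf_eq] at hn
        by_contra h
        exact hn (if_neg h)
      exact tendsto_const_nhds.congr' (h.mono fun n hn => hn.symm) }

/-- An enumeration (in fact a bijection) of all finite subsets of `ℕ` of even cardinality. -/
noncomputable def evenEnum (n : ℕ) : Finset ℕ :=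
  let F := (Denumerable.ofNat (Finset ℕ) n).image (· + 1)
  if 2 ∣ F.card then F else insert 0 F

/-- An enumeration (in fact a bijection) of all finite subsets of `ℕ` of odd cardinality. -/
noncomputable def oddEnum (n : ℕ) : Finset ℕ :=
  let F := (Denumerable.ofNat (Finset ℕ) n).image (· + 1)
  if ¬ 2 ∣ F.card then F else insert 0 F

/-- The diagram `σ₊ = {{α_F : F finite of even cardinality}}`. -/
noncomputable def sigmaPlus : ℕ → C₀(ℕ, ℝ) := fun n => alphaF (evenEnum n)

/-- The diagram `σ₋ = {{α_F : F finite of odd cardinality}}`. -/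
noncomputable def sigmaMinus : ℕ → C₀(ℕ, ℝ) := fun n => alphaF (oddEnum n)

open scoped symmDiff

namespace ZeroAtInftyContinuousMap

variable {α β : Type*} [TopologicalSpace α] [MetricSpace β] [Zero β]

lemma dist_apply_le_dist (f g : C₀(α, β)) (x : α) : dist (f x) (g x) ≤ dist f g := by
  rw [← dist_toBCF_eq_dist]
  exact f.toBCF.dist_coe_le_dist (g := g.toBCF) x

lemma dist_le_of_forall {f g : C₀(α, β)} {C : ℝ} (hC : 0 ≤ C) (h : ∀ x, dist (f x) (g x) ≤ C) :
    dist f g ≤ C := by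
  simpa only [← dist_toBCF_eq_dist] using (BoundedContinuousFunction.dist_le hC).2 h

end ZeroAtInftyContinuousMap

lemma exists_perm_comp_eq {ι X : Type*} [Countable ι] {u v : ι → X} {pt : X}
    [Infinite {i // u i = pt}] [Infinite {i // v i = pt}]
    (e : {i // u i ≠ pt} ≃ {i // v i ≠ pt}) (he : ∀ i, v (e i) = u i) :
    ∃ Φ : Equiv.Perm ι, ∀ i, v (Φ i) = u i := by
  classical
  obtain ⟨_⟩ := nonempty_denumerable {i // u i = pt}
  obtain ⟨_⟩ := nonempty_denumerable {i // v i = pt}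
  refine ⟨Equiv.subtypeCongr (Denumerable.equiv₂ _ _) e, fun i => ?_⟩
  by_cases hi : u i = pt
  · rw [Equiv.subtypeCongr, Equiv.trans_apply, Equiv.trans_apply,
      Equiv.sumCompl_symm_apply_of_pos (p := (u · = pt)) hi]
    exact (Denumerable.equiv₂ {i // u i = pt} {i // v i = pt} ⟨i, hi⟩).2.trans hi.symm
  · rw [Equiv.subtypeCongr, Equiv.trans_apply, Equiv.trans_apply,
      Equiv.sumCompl_symm_apply_of_neg (p := (u · = pt)) hi]
    exact he ⟨i, hi⟩

section Bottleneck

variable {X : Type*} [MetricSpace X] {A : Set X} {f g : ℕ → X}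

lemma bdist_le {α β : ℕ → X} (hα : ∀ n, α n ∈ A) (hβ : ∀ n, β n ∈ A) (e : (ℕ ⊕ ℕ) ≃ (ℕ ⊕ ℕ)) :
    bdist A f g ≤ ⨆ n, edist (Sum.elim f α n) (Sum.elim g β (e n)) :=
  iInf₂_le_of_le α hα <| iInf₂_le_of_le β hβ <| iInf_le _ e

lemma bdist_comm_s19 (A : Set X) (f g : ℕ → X) : bdist A f g = bdist A g f := by
  suffices key : ∀ f g : ℕ → X, bdist A g f ≤ bdist A f g from le_antisymm (key g f) (key f g)
  intro f g
  refine le_iInf₂ fun α hα => le_iInf₂ fun β hβ => le_iInf fun e => ?_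
  calc bdist A g f ≤ ⨆ n, edist (Sum.elim g β n) (Sum.elim f α (e.symm n)) := bdist_le hβ hα _
    _ = ⨆ n, edist (Sum.elim f α n) (Sum.elim g β (e n)) := by
      rw [← e.iSup_comp]
      simp only [Equiv.symm_apply_apply, edist_comm]

lemma bdist_le_of_edist_le {a : X} (ha : a ∈ A) (τ : ℕ ≃ ℕ) {r : ℝ≥0∞}
    (h : ∀ n, edist (f n) (g (τ n)) ≤ r) : bdist A f g ≤ r :=
  (bdist_le (fun _ => ha) (fun _ => ha) (Equiv.sumCongr τ (Equiv.refl ℕ))).trans <|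
    iSup_le fun | .inl n => h n | .inr _ => by simp

lemma exists_edist_lt_of_bdist_lt {r : ℝ≥0∞} (h : bdist A f g < r) {n : ℕ}
    (hn : r ≤ Metric.infEDist (f n) A) : ∃ m, edist (f n) (g m) < r := by
  simp only [bdist, iInf_lt_iff] at h
  obtain ⟨α, hα, β, hβ, e, he⟩ := h
  have hlt := (le_iSup _ (Sum.inl n)).trans_lt he
  rcases hm : e (.inl n) with m | k
  · exact ⟨m, by simpa [hm] using hlt⟩
  · refine absurd (hn.trans (Metric.infEDist_le_edist_of_mem (hβ k))) (not_le.2 ?_)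
    simpa [hm] using hlt

lemma exists_dist_lt_of_bdist_lt {pt : X} {r : ℝ} (h : bdist {pt} f g < ENNReal.ofReal r) {n : ℕ}
    (hn : r ≤ dist (f n) pt) : ∃ m, dist (f n) (g m) < r := by
  refine (exists_edist_lt_of_bdist_lt h ?_).imp fun m => edist_lt_ofReal.1
  rw [Metric.infEDist_singleton, edist_dist]
  exact ENNReal.ofReal_le_ofReal hn

end Bottleneck

section Transport

variable {X : Type*} [MetricSpace X] {pt : X} {f g : ℕ → X}

lemma DiagEquiv.exists_perm_sumElim (hfg : DiagEquiv {pt} f g) {α : ℕ → X}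
    (hα : ∀ n, α n ∈ ({pt} : Set X)) :
    ∃ Φ : Equiv.Perm (ℕ ⊕ ℕ), ∀ x, Sum.elim g α (Φ x) = Sum.elim f α x := by
  obtain ⟨e, he⟩ := hfg
  have onDiag (h : ℕ → X) : Infinite {x // Sum.elim h α x = pt} :=
    Infinite.of_injective (fun n => ⟨.inr n, hα n⟩) fun _ _ hmn => Sum.inr_injective congr(($hmn).1)
  let offDiag (h : ℕ → X) : {x // Sum.elim h α x ≠ pt} ≃ {n // h n ∉ ({pt} : Set X)} :=
    have : IsEmpty {n // Sum.elim h α (.inr n) ≠ pt} := ⟨fun n => n.2 (hα n)⟩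
    Equiv.subtypeSum.trans (Equiv.sumEmpty _ _)
  have := onDiag f
  have := onDiag g
  refine exists_perm_comp_eq ((offDiag f).trans (e.trans (offDiag g).symm)) ?_
  rintro ⟨n | n, hn⟩
  · exact he ⟨n, hn⟩
  · exact absurd (hα n) hn

lemma DiagEquiv.bdist_le (hfg : DiagEquiv {pt} f g) (h : ℕ → X) :
    bdist {pt} g h ≤ bdist {pt} f h := by
  refine le_iInf₂ fun α hα => le_iInf₂ fun β hβ => le_iInf fun E => ?_
  obtain ⟨Φ, hΦ⟩ := hfg.exists_perm_sumElim hα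
  calc bdist {pt} g h ≤ ⨆ x, edist (Sum.elim g α x) (Sum.elim h β (E (Φ.symm x))) :=
        _root_.bdist_le hα hβ (Φ.symm.trans E)
    _ = ⨆ x, edist (Sum.elim f α x) (Sum.elim h β (E x)) := by
      rw [← Φ.iSup_comp]
      simp only [Equiv.symm_apply_apply, hΦ]

end Transport

section AlphaF

open ZeroAtInftyContinuousMap

lemma alphaF_apply (F : Finset ℕ) (n : ℕ) :
    alphaF F n = if n ∈ F then 1 + 1 / ((n : ℝ) + 1) else 0 := rfl

lemma alphaF_empty : alphaF ∅ = 0 := by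
  ext n
  simp [alphaF_apply]

lemma dist_alphaF_apply (F G : Finset ℕ) (n : ℕ) :
    dist (alphaF F n) (alphaF G n) = if n ∈ F ∆ G then 1 + 1 / ((n : ℝ) + 1) else 0 := by
  by_cases hF : n ∈ F <;> by_cases hG : n ∈ G <;>
    simp [alphaF_apply, Finset.mem_symmDiff, hF, hG] <;> positivity

lemma le_dist_alphaF {F G : Finset ℕ} {n : ℕ} (hn : n ∈ F ∆ G) :
    1 + 1 / ((n : ℝ) + 1) ≤ dist (alphaF F) (alphaF G) := by
  simpa [dist_alphaF_apply, hn] using dist_apply_le_dist (alphaF F) (alphaF G) n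

lemma one_le_dist_alphaF {F G : Finset ℕ} (h : F ≠ G) : 1 ≤ dist (alphaF F) (alphaF G) := by
  obtain ⟨n, hn⟩ := Finset.symmDiff_nonempty.2 h
  exact le_trans (by simp; positivity) (le_dist_alphaF hn)

lemma dist_alphaF_symmDiff_singleton_le (F : Finset ℕ) (k : ℕ) :
    dist (alphaF F) (alphaF (F ∆ {k})) ≤ 1 + 1 / ((k : ℝ) + 1) := by
  refine dist_le_of_forall (by positivity) fun n => ?_
  rw [dist_alphaF_apply, symmDiff_symmDiff_cancel_left]
  split_ifs with hn
  · rw [Finset.mem_singleton.1 hn]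
  · positivity

lemma dist_alphaF_zero_le (F : Finset ℕ) : dist (alphaF F) 0 ≤ 2 := by
  refine dist_le_of_forall zero_le_two fun n => ?_
  rw [← alphaF_empty, dist_alphaF_apply]
  split_ifs
  · have : 1 / ((n : ℝ) + 1) ≤ 1 := div_le_one_of_le₀ (by simp) (by positivity)
    linarith
  · exact zero_le_two

lemma dist_alphaF_singleton_zero : dist (alphaF {0}) 0 = 2 := by
  refine le_antisymm (dist_alphaF_zero_le _) ?_
  have := le_dist_alphaF (F := {0}) (G := ∅) (n := 0) (by simp [Finset.mem_symmDiff])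
  norm_num [alphaF_empty] at this
  exact this

end AlphaF

open ZeroAtInftyContinuousMap in
lemma exists_pos_eq_of_dist_alphaF_lt (v : C₀(ℕ, ℝ)) :
    ∃ ε > 0, ∀ F G : Finset ℕ, dist (alphaF F) v < 1 / 2 + ε → dist (alphaF G) v < 1 / 2 + ε →
      F = G := by
  have hv : Tendsto v atTop (nhds 0) := by
    simpa [Filter.cocompact_eq_cofinite, Nat.cofinite_eq_atTop] using zero_at_infty v
  obtain ⟨K, hK⟩ := Metric.tendsto_atTop.1 hv (1 / 4) (by norm_num)
  refine ⟨min (1 / 8) (1 / (2 * ((K : ℝ) + 1))), by positivity, fun F G hF hG => ?_⟩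
  set ε := min (1 / 8) (1 / (2 * ((K : ℝ) + 1)))
  by_contra hne
  obtain ⟨k, hk⟩ := Finset.symmDiff_nonempty.2 hne
  have hKk : K ≤ k := by
    have hFG := (le_dist_alphaF hk).trans (dist_triangle_right _ _ v)
    have h2ε : 2 * ε ≤ 1 / ((K : ℝ) + 1) :=
      calc 2 * ε ≤ 2 * (1 / (2 * ((K : ℝ) + 1))) := by gcongr; exact min_le_right _ _
        _ = 1 / ((K : ℝ) + 1) := by field_simp
    have := (one_div_lt_one_div (by positivity) (by positivity)).1 (by linarith :
      1 / ((k : ℝ) + 1) < 1 / ((K : ℝ) + 1))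
    exact_mod_cast (by linarith : (K : ℝ) < k).le
  obtain ⟨H, hkH, hH⟩ : ∃ H, k ∈ H ∧ dist (alphaF H) v < 1 / 2 + ε := by
    rcases Finset.mem_symmDiff.1 hk with h | h
    exacts [⟨F, h.1, hF⟩, ⟨G, h.1, hG⟩]
  have hvk : 1 / 2 - ε < v k := by
    have := (dist_apply_le_dist _ _ k).trans_lt hH
    rw [alphaF_apply, if_pos hkH, Real.dist_eq] at this
    have : 0 ≤ 1 / ((k : ℝ) + 1) := by positivity
    linarith [le_abs_self (1 + 1 / ((k : ℝ) + 1) - v k)]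
  have := hK k hKk
  rw [Real.dist_eq, sub_zero] at this
  linarith [le_abs_self (v k), min_le_left (1 / 8 : ℝ) (1 / (2 * ((K : ℝ) + 1)))]

section Enumerations

lemma two_dvd_card_symmDiff_singleton_iff {α : Type*} [DecidableEq α] (s : Finset α) (a : α) :
    2 ∣ (s ∆ {a}).card ↔ ¬ 2 ∣ s.card := by
  by_cases ha : a ∈ s
  · have hs : s ∆ {a} = s.erase a := by
      ext b; by_cases hb : b = a <;> simp [Finset.mem_symmDiff, hb, ha]
    have := Finset.card_pos.2 ⟨a, ha⟩
    rw [hs, Finset.card_erase_of_mem ha]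
    omega
  · have hs : s ∆ {a} = insert a s := by
      ext b; by_cases hb : b = a <;> simp [Finset.mem_symmDiff, hb, ha]
    rw [hs, Finset.card_insert_of_notMem ha]
    omega

lemma two_dvd_card_evenEnum (n : ℕ) : 2 ∣ (evenEnum n).card := by
  simp only [evenEnum]
  split_ifs with h
  all_goals first
    | exact h
    | rw [Finset.card_insert_of_notMem (by simp)]; omega

lemma not_two_dvd_card_oddEnum (n : ℕ) : ¬ 2 ∣ (oddEnum n).card := by
  simp only [oddEnum]
  split_ifs with h
  all_goals first
    | exact h
    | rw [Finset.card_insert_of_notMem (by simp)]; omega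

lemma exists_oddEnum_eq_singleton_zero : ∃ n, oddEnum n = {0} := by
  refine ⟨Denumerable.eqv (Finset ℕ) ∅, ?_⟩
  have : Denumerable.ofNat (Finset ℕ) (Denumerable.eqv (Finset ℕ) ∅) = ∅ :=
    Denumerable.ofNat_encode _
  simp [oddEnum, this]

/-- Toggling `j + 1` reverses parity and commutes with the parity correction by `0` in `evenEnum`
and `oddEnum`. -/
lemma exists_perm_oddEnum_eq_symmDiff (j : ℕ) :
    ∃ τ : ℕ ≃ ℕ, ∀ n, oddEnum (τ n) = evenEnum n ∆ {j + 1} := by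
  let toggle : Equiv.Perm (Finset ℕ) :=
    Function.Involutive.toPerm (symmDiff · {j}) fun S => symmDiff_symmDiff_cancel_right {j} S
  refine ⟨(Denumerable.eqv (Finset ℕ)).permCongr toggle, fun n => ?_⟩
  have himage : (Denumerable.ofNat (Finset ℕ) n ∆ {j}).image (· + 1) =
      (Denumerable.ofNat (Finset ℕ) n).image (· + 1) ∆ {j + 1} := by
    rw [Finset.image_symmDiff _ _ (add_left_injective 1), Finset.image_singleton]
  have hofNat : Denumerable.ofNat (Finset ℕ) ((Denumerable.eqv (Finset ℕ)).permCongr toggle n) =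
      Denumerable.ofNat (Finset ℕ) n ∆ {j} := by
    rw [Equiv.permCongr_apply]
    exact Denumerable.ofNat_encode _
  simp only [oddEnum, evenEnum, hofNat, himage, two_dvd_card_symmDiff_singleton_iff, not_not]
  split_ifs
  · rfl
  · ext k
    by_cases hk : k = 0 <;> simp [Finset.mem_symmDiff, hk]

lemma oddEnum_ne_evenEnum (m n : ℕ) : oddEnum m ≠ evenEnum n := fun h =>
  not_two_dvd_card_oddEnum m (h ▸ two_dvd_card_evenEnum n)

lemma isDiagram_alphaF (E : ℕ → Finset ℕ) : IsDiagram {0} (fun n => alphaF (E n)) := by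
  refine ⟨fun _ => 0, fun _ => rfl, ne_top_of_le_ne_top (ENNReal.ofReal_ne_top (r := 2)) ?_⟩
  refine bdist_le_of_edist_le (Set.mem_singleton 0) (Equiv.refl ℕ) fun n => ?_
  rw [edist_dist]
  exact ENNReal.ofReal_le_ofReal (dist_alphaF_zero_le (E n))

lemma bdist_sigmaPlus_sigmaMinus : bdist {0} sigmaPlus sigmaMinus = 1 := by
  refine le_antisymm ?_ ?_
  · refine ENNReal.le_of_forall_pos_le_add fun ε hε _ => ?_
    obtain ⟨j, hj⟩ := exists_nat_one_div_lt (NNReal.coe_pos.2 hε)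
    obtain ⟨τ, hτ⟩ := exists_perm_oddEnum_eq_symmDiff j
    calc bdist {0} sigmaPlus sigmaMinus ≤ ENNReal.ofReal (1 + 1 / (((j + 1 : ℕ) : ℝ) + 1)) := by
          refine bdist_le_of_edist_le (Set.mem_singleton 0) τ fun n => ?_
          rw [edist_dist, sigmaMinus, hτ]
          exact ENNReal.ofReal_le_ofReal (dist_alphaF_symmDiff_singleton_le _ _)
      _ ≤ ENNReal.ofReal (1 + ε) := by
          have : 1 / (((j + 1 : ℕ) : ℝ) + 1) ≤ 1 / ((j : ℝ) + 1) := by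
            gcongr
            norm_num
          exact ENNReal.ofReal_le_ofReal (by linarith)
      _ = 1 + ε := by
          rw [ENNReal.ofReal_add zero_le_one ε.coe_nonneg, ENNReal.ofReal_one,
            ENNReal.ofReal_coe_nnreal]
  · by_contra! h
    rw [bdist_comm_s19, ← ENNReal.ofReal_one] at h
    obtain ⟨m, hm⟩ := exists_oddEnum_eq_singleton_zero
    obtain ⟨n, hn⟩ := exists_dist_lt_of_bdist_lt h (n := m) <| by
      rw [sigmaMinus, hm, dist_alphaF_singleton_zero]
      exact one_le_two
    exact hn.not_ge (one_le_dist_alphaF (oddEnum_ne_evenEnum m n))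

lemma not_exists_midpoint_sigmaPlus_sigmaMinus :
    ¬ ∃ μ : ℕ → C₀(ℕ, ℝ), bdist {0} sigmaPlus μ ≤ ENNReal.ofReal (1 / 2) ∧
      bdist {0} sigmaMinus μ ≤ ENNReal.ofReal (1 / 2) := by
  rintro ⟨μ, hplus, hminus⟩
  obtain ⟨m, hm⟩ := exists_oddEnum_eq_singleton_zero
  have hα : sigmaMinus m = alphaF {0} := by rw [sigmaMinus, hm]
  obtain ⟨n₀, hn₀⟩ := exists_dist_lt_of_bdist_lt (n := m) (r := 3 / 4)
    (hminus.trans_lt ((ENNReal.ofReal_lt_ofReal_iff (by norm_num)).2 (by norm_num)))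
    (by rw [hα, dist_alphaF_singleton_zero]; norm_num)
  have hfar : 5 / 4 ≤ dist (μ n₀) 0 := by
    have := dist_triangle (alphaF {0}) (μ n₀) 0
    rw [hα] at hn₀
    linarith [dist_alphaF_singleton_zero]
  obtain ⟨ε, hε, hsep⟩ := exists_pos_eq_of_dist_alphaF_lt (μ n₀)
  have partner : ∀ E : ℕ → Finset ℕ, bdist {0} (fun n => alphaF (E n)) μ ≤ ENNReal.ofReal (1 / 2) →
      ∃ m, dist (alphaF (E m)) (μ n₀) < 1 / 2 + ε := by
    intro E hE
    have hδ : bdist {0} μ (fun n => alphaF (E n)) < ENNReal.ofReal (1 / 2 + min ε (1 / 2)) := by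
      rw [bdist_comm_s19]
      exact hE.trans_lt ((ENNReal.ofReal_lt_ofReal_iff (by positivity)).2 (by simp [hε]))
    obtain ⟨m, hm⟩ := exists_dist_lt_of_bdist_lt hδ (n := n₀)
      (by linarith [min_le_right ε (1 / 2)])
    exact ⟨m, by rw [dist_comm]; linarith [min_le_left ε (1 / 2)]⟩
  obtain ⟨mPlus, hPlus⟩ := partner evenEnum hplus
  obtain ⟨mMinus, hMinus⟩ := partner oddEnum hminus
  exact oddEnum_ne_evenEnum mMinus mPlus (hsep _ _ hMinus hPlus)

/-- `c₀` (with the sup metric) is geodesic, the diagrams `σ₊, σ₋ ∈ D_∞(c₀, {0})` are at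
bottleneck distance `1`, yet they cannot be joined by a geodesic in `D_∞(c₀, {0})`:
the space `D_∞(c₀, {0})` is not geodesic. -/
theorem stmt_19 :
    (∀ x y : C₀(ℕ, ℝ), ∃ γ : ℝ → C₀(ℕ, ℝ), γ 0 = x ∧ γ 1 = y ∧
      ∀ s t : ℝ, s ∈ Set.Icc (0:ℝ) 1 → t ∈ Set.Icc (0:ℝ) 1 →
        dist (γ s) (γ t) = |s - t| * dist x y) ∧
    IsDiagram ({0} : Set C₀(ℕ, ℝ)) sigmaPlus ∧
    IsDiagram ({0} : Set C₀(ℕ, ℝ)) sigmaMinus ∧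
    bdist ({0} : Set C₀(ℕ, ℝ)) sigmaPlus sigmaMinus = 1 ∧
    ¬ ∃ Γ : ℝ → ℕ → C₀(ℕ, ℝ),
        DiagEquiv ({0} : Set C₀(ℕ, ℝ)) (Γ 0) sigmaPlus ∧
        DiagEquiv ({0} : Set C₀(ℕ, ℝ)) (Γ 1) sigmaMinus ∧
        (∀ t ∈ Set.Icc (0:ℝ) 1, IsDiagram ({0} : Set C₀(ℕ, ℝ)) (Γ t)) ∧
        ∀ s t : ℝ, s ∈ Set.Icc (0:ℝ) 1 → t ∈ Set.Icc (0:ℝ) 1 →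
          bdist ({0} : Set C₀(ℕ, ℝ)) (Γ s) (Γ t) =
            ENNReal.ofReal |s - t| * bdist ({0} : Set C₀(ℕ, ℝ)) sigmaPlus sigmaMinus := by
  refine ⟨fun x y => ⟨AffineMap.lineMap x y, AffineMap.lineMap_apply_zero x y,
    AffineMap.lineMap_apply_one x y, fun s t _ _ => by rw [dist_lineMap_lineMap, Real.dist_eq]⟩,
    isDiagram_alphaF evenEnum, isDiagram_alphaF oddEnum, bdist_sigmaPlus_sigmaMinus, ?_⟩
  rintro ⟨Γ, h₀, h₁, -, hΓ⟩
  have hhalf : ∀ t ∈ Icc (0 : ℝ) 1, |t - 1 / 2| = 1 / 2 →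
      bdist {0} (Γ t) (Γ (1 / 2)) = ENNReal.ofReal (1 / 2) := fun t ht h => by
    rw [hΓ t (1 / 2) ht (by norm_num), h, bdist_sigmaPlus_sigmaMinus, mul_one]
  exact not_exists_midpoint_sigmaPlus_sigmaMinus
    ⟨Γ (1 / 2), (h₀.bdist_le _).trans (hhalf 0 (by norm_num) (by norm_num)).le,
      (h₁.bdist_le _).trans (hhalf 1 (by norm_num) (by norm_num)).le⟩
end Enumerations
end
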